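/- arXiv:2411.02288 — 4 statements merged into one kernel-verified Lean document; each statement's English description precedes it below -/
import Mathlib

section
/- Let T be a finite tree, let M be a minimal dominating set of T, let X ⊆ N_2(M), and let A_2 = N(X) ∩ a_2(M) (the set of vertices of a_2(M) having a neighbour in X). If the subgraph of T induced by A_2 ∪ X is connected and X is an independent set in T, then there exists a minimal dominating set M' of T with |M'| ≥ |M| − |A_2| + |X| (as integers). -/
open scoped Classical

variable {V : Type*} [Fintype V] [DecidableEq V]

/-- `S` is a dominating set of `G`: every vertex is in `S` or adjacent to a vertex of `S`. -/
def IsDomSet (G : SimpleGraph V) (S : Finset V) : Prop :=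
  ∀ v : V, v ∈ S ∨ ∃ u ∈ S, G.Adj u v

/-- `S` is a minimal dominating set: it is dominating and no proper subset is dominating. -/
def MinimalDomSet (G : SimpleGraph V) (S : Finset V) : Prop :=
  IsDomSet G S ∧ ∀ T : Finset V, T ⊂ S → ¬ IsDomSet G T

/-- `d_i(G)`: the number of dominating sets of `G` of cardinality `i`. -/
noncomputable def domCount (G : SimpleGraph V) (i : ℕ) : ℕ :=
  (Finset.univ.filter fun S : Finset V => IsDomSet G S ∧ S.card = i).card

/-- `a(S)`: the set of critical vertices of a dominating set `S`. -/
noncomputable def aSet (G : SimpleGraph V) (S : Finset V) : Finset V :=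
  S.filter fun v => ¬ IsDomSet G (S.erase v)

/-- `a(G,i)`: the sum of `|a(S)|` over all dominating sets `S` of cardinality `i`. -/
noncomputable def aTotal (G : SimpleGraph V) (i : ℕ) : ℕ :=
  ∑ S ∈ Finset.univ.filter (fun S : Finset V => IsDomSet G S ∧ S.card = i), (aSet G S).card

/-- `γ(G)`: the minimum cardinality of a dominating set. -/
noncomputable def gamma (G : SimpleGraph V) : ℕ :=
  sInf {k | ∃ S : Finset V, IsDomSet G S ∧ S.card = k}

/-- `Γ(G)`: the maximum cardinality of a minimal dominating set. -/
noncomputable def bigGamma (G : SimpleGraph V) : ℕ :=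
  sSup {k | ∃ S : Finset V, MinimalDomSet G S ∧ S.card = k}

/-- The closed neighbourhood `N[v]` as a finset. -/
noncomputable def closedNbhd (G : SimpleGraph V) (v : V) : Finset V :=
  Finset.univ.filter fun u => u = v ∨ G.Adj v u

/-- `N_1(S)`: vertices outside `S` with exactly one closed neighbour in `S`. -/
noncomputable def N1Set (G : SimpleGraph V) (S : Finset V) : Finset V :=
  Finset.univ.filter fun v => v ∉ S ∧ (closedNbhd G v ∩ S).card = 1

/-- `N_2(S)`: vertices outside `S` with at least two closed neighbours in `S`. -/
noncomputable def N2Set (G : SimpleGraph V) (S : Finset V) : Finset V :=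
  Finset.univ.filter fun v => v ∉ S ∧ 2 ≤ (closedNbhd G v ∩ S).card

/-- `a_1(S)`: critical vertices whose closed neighbourhood meets `N_1(S)`. -/
noncomputable def a1Set (G : SimpleGraph V) (S : Finset V) : Finset V :=
  (aSet G S).filter fun v => (closedNbhd G v ∩ N1Set G S).Nonempty

/-- `a_2(S)`: critical vertices whose closed neighbourhood misses `N_1(S)`. -/
noncomputable def a2Set (G : SimpleGraph V) (S : Finset V) : Finset V :=
  (aSet G S).filter fun v => closedNbhd G v ∩ N1Set G S = ∅

/-- In the tree `G` rooted at `r`, `x` is a descendant of `y`: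
`y` lies on the unique path from `x` to the root `r`. -/
def Descendant (G : SimpleGraph V) (r x y : V) : Prop :=
  G.dist x r = G.dist x y + G.dist y r

/-- `x` is a child of `y` in `G` rooted at `r`. -/
def IsChild (G : SimpleGraph V) (r x y : V) : Prop :=
  Descendant G r x y ∧ G.dist y x = 1

/-- `p` is the parent of `x` in `G` rooted at `r`. -/
def IsParent (G : SimpleGraph V) (r p x : V) : Prop :=
  IsChild G r x p

/-- `x` is a grandchild of `y` in `G` rooted at `r`. -/
def IsGrandchild (G : SimpleGraph V) (r x y : V) : Prop :=
  Descendant G r x y ∧ G.dist y x = 2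

section AuxLemmas

open SimpleGraph Finset

omit [Fintype V] [DecidableEq V] in
theorem tree_path_length_eq_dist {G : SimpleGraph V} (hT : G.IsTree) {u v : V}
    (p : G.Walk u v) (hp : p.IsPath) : p.length = G.dist u v := by
  obtain ⟨w0, hw0⟩ := (hT.isConnected u v).exists_walk_length_eq_dist
  have huniq := hT.existsUnique_path u v
  have h1 : p = w0.bypass := (huniq.unique hp w0.bypass_isPath)
  have h2 : w0.bypass.length ≤ w0.length := w0.length_bypass_le
  have h3 : G.dist u v ≤ p.length := SimpleGraph.dist_le p
  rw [h1] at h3 ⊢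
  omega

omit [Fintype V] [DecidableEq V] in
theorem tree_adj_dist {G : SimpleGraph V} (hT : G.IsTree) (r : V) {u v : V}
    (h : G.Adj u v) : G.dist r v = G.dist r u + 1 ∨ G.dist r u = G.dist r v + 1 := by
  have hle1 : G.dist r v ≤ G.dist r u + 1 := by
    obtain ⟨w, hw⟩ := (hT.isConnected r u).exists_walk_length_eq_dist
    have := SimpleGraph.dist_le (w.concat h)
    rwa [SimpleGraph.Walk.length_concat, hw] at this
  have hle2 : G.dist r u ≤ G.dist r v + 1 := by
    obtain ⟨w, hw⟩ := (hT.isConnected r v).exists_walk_length_eq_dist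
    have := SimpleGraph.dist_le (w.concat h.symm)
    rwa [SimpleGraph.Walk.length_concat, hw] at this
  have hne : G.dist r u ≠ G.dist r v := by
    intro heq
    obtain ⟨q, hq, _⟩ := hT.existsUnique_path r v
    have hqlen : q.length = G.dist r v := tree_path_length_eq_dist hT q hq
    by_cases hu : u ∈ q.support
    · have h1 : (q.takeUntil u hu).IsPath := hq.takeUntil hu
      have h2 : (q.takeUntil u hu).length = G.dist r u :=
        tree_path_length_eq_dist hT _ h1
      have h3 := congrArg SimpleGraph.Walk.length (q.take_spec hu)
      rw [SimpleGraph.Walk.length_append] at h3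
      have h4 : (q.dropUntil u hu).length = 0 := by omega
      exact h.ne (SimpleGraph.Walk.eq_of_length_eq_zero h4)
    · have hpath : (q.concat h.symm).IsPath := by
        rw [← SimpleGraph.Walk.isPath_reverse_iff, SimpleGraph.Walk.reverse_concat]
        rw [SimpleGraph.Walk.cons_isPath_iff]
        refine ⟨hq.reverse, ?_⟩
        rwa [SimpleGraph.Walk.support_reverse, List.mem_reverse]
      have := tree_path_length_eq_dist hT _ hpath
      rw [SimpleGraph.Walk.length_concat] at this
      omega
  omega

theorem mem_closedNbhd {G : SimpleGraph V} {u v : V} :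
    u ∈ closedNbhd G v ↔ u = v ∨ G.Adj v u := by
  simp [closedNbhd]

theorem mem_N1 {G : SimpleGraph V} {S : Finset V} {v : V} :
    v ∈ N1Set G S ↔ v ∉ S ∧ (closedNbhd G v ∩ S).card = 1 := by
  simp [N1Set]

theorem mem_N2 {G : SimpleGraph V} {S : Finset V} {v : V} :
    v ∈ N2Set G S ↔ v ∉ S ∧ 2 ≤ (closedNbhd G v ∩ S).card := by
  simp [N2Set]

theorem N1_notMem {G : SimpleGraph V} {S : Finset V} {v : V} (h : v ∈ N1Set G S) : v ∉ S :=
  (mem_N1.1 h).1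

theorem N1_unique {G : SimpleGraph V} {M : Finset V} {p u v : V} (hp : p ∈ N1Set G M)
    (hu : u ∈ M) (hau : G.Adj u p) (hv : v ∈ M) (hav : G.Adj v p) : u = v := by
  have hcard := (mem_N1.1 hp).2
  have h1 : u ∈ closedNbhd G p ∩ M :=
    Finset.mem_inter.2 ⟨mem_closedNbhd.2 (Or.inr hau.symm), hu⟩
  have h2 : v ∈ closedNbhd G p ∩ M :=
    Finset.mem_inter.2 ⟨mem_closedNbhd.2 (Or.inr hav.symm), hv⟩
  exact Finset.card_le_one.1 (le_of_eq hcard) _ h1 _ h2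

omit [Fintype V] in
theorem crit_of_minimal {G : SimpleGraph V} {M : Finset V} (hM : MinimalDomSet G M)
    {m : V} (hm : m ∈ M) : ¬ IsDomSet G (M.erase m) :=
  hM.2 _ (Finset.erase_ssubset hm)

theorem mem_aSet_of_minimal {G : SimpleGraph V} {M : Finset V} (hM : MinimalDomSet G M)
    {m : V} (hm : m ∈ M) : m ∈ aSet G M :=
  Finset.mem_filter.2 ⟨hm, crit_of_minimal hM hm⟩

theorem a2_no_M_adj {G : SimpleGraph V} {M : Finset V} (hM : MinimalDomSet G M)
    {a u : V} (ha : a ∈ a2Set G M) (hu : u ∈ M) : ¬ G.Adj u a := by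
  intro hadj
  have ha' := Finset.mem_filter.1 ha
  have hcrit : ¬ IsDomSet G (M.erase a) := (Finset.mem_filter.1 ha'.1).2
  have hempty : closedNbhd G a ∩ N1Set G M = ∅ := ha'.2
  rw [IsDomSet] at hcrit
  push_neg at hcrit
  obtain ⟨v, hv1, hv2⟩ := hcrit
  by_cases hva : v = a
  · subst hva
    exact hv2 u (Finset.mem_erase.2 ⟨hadj.ne, hu⟩) hadj
  · have hvM : v ∉ M := fun h => hv1 (Finset.mem_erase.2 ⟨hva, h⟩)
    rcases hM.1 v with h | ⟨w, hw, hadjw⟩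
    · exact hvM h
    · have hwa : w = a := by
        by_contra hne
        exact hv2 w (Finset.mem_erase.2 ⟨hne, hw⟩) hadjw
      subst hwa
      have hvN1 : v ∈ N1Set G M := by
        rw [mem_N1]
        refine ⟨hvM, ?_⟩
        have : closedNbhd G v ∩ M = {w} := by
          ext z
          simp only [Finset.mem_inter, mem_closedNbhd, Finset.mem_singleton]
          constructor
          · rintro ⟨hz1, hz2⟩
            rcases hz1 with rfl | hz1
            · exact absurd hz2 hvM
            · by_contra hne
              exact hv2 z (Finset.mem_erase.2 ⟨hne, hz2⟩) hz1.symm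
          · rintro rfl
            exact ⟨Or.inr hadjw.symm, hw⟩
        rw [this, Finset.card_singleton]
      have : v ∈ closedNbhd G w ∩ N1Set G M :=
        Finset.mem_inter.2 ⟨mem_closedNbhd.2 (Or.inr hadjw), hvN1⟩
      rw [hempty] at this
      exact absurd this (Finset.notMem_empty v)

theorem a1_nonempty {G : SimpleGraph V} {M : Finset V} (hM : MinimalDomSet G M)
    {m : V} (hm : m ∈ M) (hm2 : m ∉ a2Set G M) :
    ∃ p, G.Adj m p ∧ p ∈ N1Set G M := by
  have hma : m ∈ aSet G M := mem_aSet_of_minimal hM hm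
  have : closedNbhd G m ∩ N1Set G M ≠ ∅ := by
    intro h
    exact hm2 (Finset.mem_filter.2 ⟨hma, h⟩)
  obtain ⟨p, hp⟩ := Finset.nonempty_iff_ne_empty.2 this
  rw [Finset.mem_inter, mem_closedNbhd] at hp
  obtain ⟨hp1, hp2⟩ := hp
  rcases hp1 with rfl | hp1
  · exact absurd hm (N1_notMem hp2)
  · exact ⟨p, hp1, hp2⟩

theorem exists_minimalDomSet_ge_of_indep {G : SimpleGraph V} (S0 : Finset V)
    (h0 : ∀ u ∈ S0, ∀ v ∈ S0, ¬ G.Adj u v) :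
    ∃ M' : Finset V, MinimalDomSet G M' ∧ S0.card ≤ M'.card := by
  classical
  set F : Finset (Finset V) :=
    Finset.univ.filter (fun S => (∀ u ∈ S, ∀ v ∈ S, ¬ G.Adj u v) ∧ S0 ⊆ S) with hF
  have hne : F.Nonempty :=
    ⟨S0, Finset.mem_filter.2 ⟨Finset.mem_univ _, h0, le_refl _⟩⟩
  obtain ⟨Smax, hSm, hmax⟩ := F.exists_max_image Finset.card hne
  have hSm' := Finset.mem_filter.1 hSm
  have hindep := hSm'.2.1
  have hsub := hSm'.2.2
  have hdom : IsDomSet G Smax := by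
    intro v
    by_contra hv
    push_neg at hv
    obtain ⟨hv1, hv2⟩ := hv
    have hins : insert v Smax ∈ F := by
      refine Finset.mem_filter.2 ⟨Finset.mem_univ _, ?_, hsub.trans (Finset.subset_insert _ _)⟩
      intro a ha b hb hadj
      rcases Finset.mem_insert.1 ha with rfl | ha'
      · rcases Finset.mem_insert.1 hb with rfl | hb'
        · exact G.irrefl hadj
        · exact hv2 b hb' hadj.symm
      · rcases Finset.mem_insert.1 hb with rfl | hb'
        · exact hv2 a ha' hadj
        · exact hindep a ha' b hb' hadj
    have := hmax _ hins
    rw [Finset.card_insert_of_notMem hv1] at this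
    omega
  refine ⟨Smax, ⟨hdom, ?_⟩, Finset.card_le_card hsub⟩
  intro T hT hTdom
  obtain ⟨v, hvS, hvT⟩ := Finset.exists_of_ssubset hT
  rcases hTdom v with h | ⟨u, hu, hadj⟩
  · exact hvT h
  · exact hindep u (hT.1 hu) v hvS hadj

end AuxLemmas
theorem exists_larger_minimal_dominating_set_from_a2 (G : SimpleGraph V) (hT : G.IsTree)
    (M : Finset V) (hM : MinimalDomSet G M)
    (X : Finset V) (hX : X ⊆ N2Set G M)
    (A2 : Finset V) (hA2 : A2 = (a2Set G M).filter fun a => ∃ x ∈ X, G.Adj x a)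
    (hconn : (G.induce (↑(A2 ∪ X) : Set V)).Connected)
    (hind : ∀ x ∈ X, ∀ y ∈ X, ¬ G.Adj x y) :
    ∃ M' : Finset V, MinimalDomSet G M' ∧
      (M.card : ℤ) - (A2.card : ℤ) + (X.card : ℤ) ≤ (M'.card : ℤ) := by
  classical
  have hA2a2 : ∀ a ∈ A2, a ∈ a2Set G M := by
    intro a ha
    rw [hA2] at ha
    exact (Finset.mem_filter.1 ha).1
  have hA2subM : A2 ⊆ M := by
    intro a ha
    exact (Finset.mem_filter.1 (Finset.mem_filter.1 (hA2a2 a ha)).1).1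
  have hXnotM : ∀ x ∈ X, x ∉ M := fun x hx => (mem_N2.1 (hX hx)).1
  have hXadjA2 : ∀ {y : V}, y ∈ a2Set G M → ∀ {x : V}, x ∈ X → G.Adj x y → y ∈ A2 := by
    intro y hy x hx hadj
    rw [hA2]
    exact Finset.mem_filter.2 ⟨hy, x, hx, hadj⟩
  -- obtain a base vertex x0 ∈ X
  obtain ⟨x0, hx0⟩ : ∃ x, x ∈ X := by
    obtain ⟨⟨t, ht⟩⟩ := hconn.nonempty
    have ht' : t ∈ A2 ∪ X := by exact_mod_cast ht
    rcases Finset.mem_union.1 ht' with htA | htX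
    · have := hA2a2 t htA
      rw [hA2] at htA
      obtain ⟨x, hx, -⟩ := (Finset.mem_filter.1 htA).2
      exact ⟨x, hx⟩
    · exact ⟨t, htX⟩
  set d : V → ℕ := fun v => G.dist x0 v with hd
  have hparity : ∀ u v : V, G.Adj u v → (Even (d u) ↔ ¬ Even (d v)) := by
    intro u v h
    rcases tree_adj_dist hT x0 h with h1 | h1
    · simp only [hd]
      rw [h1, Nat.even_add_one]
      try tauto
    · simp only [hd]
      rw [h1, Nat.even_add_one]
      try tauto
  -- parity of vertices of A2 ∪ X
  have hgood : ∀ y : V, (y ∈ X → Even (d y)) ∧ (y ∈ A2 → ¬ Even (d y)) := by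
    have key : ∀ (a b : (↑(A2 ∪ X) : Set V)) (w : (G.induce (↑(A2 ∪ X) : Set V)).Walk a b),
        ((↑a ∈ X ∧ Even (d ↑a)) ∨ (↑a ∈ A2 ∧ ¬ Even (d ↑a))) →
        ((↑b ∈ X ∧ Even (d ↑b)) ∨ (↑b ∈ A2 ∧ ¬ Even (d ↑b))) := by
      intro a b w
      induction w with
      | nil => exact id
      | @cons a c b h q ih =>
        intro ha
        apply ih
        have hadj : G.Adj ↑a ↑c := h
        have hcs : (c : V) ∈ A2 ∪ X := by exact_mod_cast c.2
        rcases ha with ⟨haX, haE⟩ | ⟨haA, haE⟩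
        · rcases Finset.mem_union.1 hcs with hcA | hcX
          · exact Or.inr ⟨hcA, (hparity _ _ hadj).1 haE⟩
          · exact absurd hadj (hind _ haX _ hcX)
        · rcases Finset.mem_union.1 hcs with hcA | hcX
          · exact absurd hadj (a2_no_M_adj hM (hA2a2 _ hcA) (hA2subM haA))
          · refine Or.inl ⟨hcX, ?_⟩
            have := hparity (↑a) (↑c) hadj
            tauto
    intro y
    constructor
    · intro hy
      have hys : y ∈ (↑(A2 ∪ X) : Set V) := by
        exact_mod_cast Finset.mem_union.2 (Or.inr hy)
      have hx0s : x0 ∈ (↑(A2 ∪ X) : Set V) := by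
        exact_mod_cast Finset.mem_union.2 (Or.inr hx0)
      obtain ⟨w⟩ := hconn.preconnected ⟨x0, hx0s⟩ ⟨y, hys⟩
      have hstart : (x0 ∈ X ∧ Even (d x0)) ∨ (x0 ∈ A2 ∧ ¬ Even (d x0)) := by
        left
        refine ⟨hx0, ?_⟩
        simp [hd, SimpleGraph.dist_self]
      rcases key _ _ w hstart with ⟨-, h⟩ | ⟨hyA, -⟩
      · exact h
      · exact absurd (hA2subM hyA) (hXnotM y hy)
    · intro hy
      have hys : y ∈ (↑(A2 ∪ X) : Set V) := by
        exact_mod_cast Finset.mem_union.2 (Or.inl hy)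
      have hx0s : x0 ∈ (↑(A2 ∪ X) : Set V) := by
        exact_mod_cast Finset.mem_union.2 (Or.inr hx0)
      obtain ⟨w⟩ := hconn.preconnected ⟨x0, hx0s⟩ ⟨y, hys⟩
      have hstart : (x0 ∈ X ∧ Even (d x0)) ∨ (x0 ∈ A2 ∧ ¬ Even (d x0)) := by
        left
        refine ⟨hx0, ?_⟩
        simp [hd, SimpleGraph.dist_self]
      rcases key _ _ w hstart with ⟨hyX, -⟩ | ⟨-, h⟩
      · exact absurd (hA2subM hy) (hXnotM y hyX)
      · exact h
  have hXeven : ∀ x ∈ X, Even (d x) := fun x hx => (hgood x).1 hx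
  -- the replacement function
  set f : V → V := fun m =>
    if h : (¬ Even (d m) ∧ m ∉ a2Set G M) ∧ ∃ p, G.Adj m p ∧ p ∈ N1Set G M
    then h.2.choose else m with hf
  have hfspec : ∀ m ∈ M \ A2,
      (f m = m ∧ (Even (d m) ∨ m ∈ a2Set G M)) ∨
      (¬ Even (d m) ∧ m ∉ a2Set G M ∧ G.Adj m (f m) ∧ f m ∈ N1Set G M) := by
    intro m hm
    by_cases hc : Even (d m) ∨ m ∈ a2Set G M
    · left
      refine ⟨?_, hc⟩
      have hneg : ¬ ((¬ Even (d m) ∧ m ∉ a2Set G M) ∧ ∃ p, G.Adj m p ∧ p ∈ N1Set G M) := by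
        tauto
      show (if h : (¬ Even (d m) ∧ m ∉ a2Set G M) ∧ ∃ p, G.Adj m p ∧ p ∈ N1Set G M
        then h.2.choose else m) = m
      exact dif_neg hneg
    · push_neg at hc
      have hex : ∃ p, G.Adj m p ∧ p ∈ N1Set G M :=
        a1_nonempty hM (Finset.mem_sdiff.1 hm).1 hc.2
      have hcond : (¬ Even (d m) ∧ m ∉ a2Set G M) ∧ ∃ p, G.Adj m p ∧ p ∈ N1Set G M :=
        ⟨hc, hex⟩
      right
      have hval : f m = hcond.2.choose := by
        show (if h : (¬ Even (d m) ∧ m ∉ a2Set G M) ∧ ∃ p, G.Adj m p ∧ p ∈ N1Set G M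
          then h.2.choose else m) = hcond.2.choose
        exact dif_pos hcond
      refine ⟨hc.1, hc.2, ?_, ?_⟩
      · rw [hval]; exact hcond.2.choose_spec.1
      · rw [hval]; exact hcond.2.choose_spec.2
  -- the three classes of vertices in our independent set
  set P : V → Prop := fun y =>
    y ∈ X ∨ (y ∈ M ∧ y ∉ A2 ∧ (Even (d y) ∨ y ∈ a2Set G M)) ∨ (y ∈ N1Set G M ∧ Even (d y))
    with hP
  have master : ∀ y z : V, P y → P z → ¬ G.Adj y z := by
    have aux : ∀ y z : V, P y → P z → G.Adj y z →
        (y ∈ X → False) := by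
      intro y z hy hz hadj hyX
      rcases hz with hzX | ⟨hzM, hzA2, hzc⟩ | ⟨hzN1, hzE⟩
      · exact hind _ hyX _ hzX hadj
      · rcases hzc with hzE | hza2
        · have := (hparity y z hadj).1 (hXeven y hyX)
          exact this hzE
        · exact hzA2 (hXadjA2 hza2 hyX hadj)
      · have := (hparity y z hadj).1 (hXeven y hyX)
        exact this hzE
    intro y z hy hz hadj
    rcases hy with hyX | hy'
    · exact aux y z (Or.inl hyX) hz hadj hyX
    rcases hz with hzX | hz'
    · exact aux z y (Or.inl hzX) (Or.inr hy') hadj.symm hzX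
    -- now neither is in X
    rcases hy' with ⟨hyM, hyA2, hyc⟩ | ⟨hyN1, hyE⟩
    · rcases hz' with ⟨hzM, hzA2, hzc⟩ | ⟨hzN1, hzE⟩
      · -- kept-kept
        by_cases hya2 : y ∈ a2Set G M
        · exact a2_no_M_adj hM hya2 hzM hadj.symm
        by_cases hza2 : z ∈ a2Set G M
        · exact a2_no_M_adj hM hza2 hyM hadj
        have hyE : Even (d y) := hyc.resolve_right hya2
        have hzE : Even (d z) := hzc.resolve_right hza2
        exact (hparity y z hadj).1 hyE hzE
      · -- kept-priv
        by_cases hya2 : y ∈ a2Set G M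
        · have hempty : closedNbhd G y ∩ N1Set G M = ∅ :=
            (Finset.mem_filter.1 hya2).2
          have : z ∈ closedNbhd G y ∩ N1Set G M :=
            Finset.mem_inter.2 ⟨mem_closedNbhd.2 (Or.inr hadj), hzN1⟩
          rw [hempty] at this
          exact absurd this (Finset.notMem_empty z)
        · have hyE : Even (d y) := hyc.resolve_right hya2
          exact (hparity y z hadj).1 hyE hzE
    · rcases hz' with ⟨hzM, hzA2, hzc⟩ | ⟨hzN1, hzE⟩
      · -- priv-kept
        by_cases hza2 : z ∈ a2Set G M
        · have hempty : closedNbhd G z ∩ N1Set G M = ∅ :=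
            (Finset.mem_filter.1 hza2).2
          have : y ∈ closedNbhd G z ∩ N1Set G M :=
            Finset.mem_inter.2 ⟨mem_closedNbhd.2 (Or.inr hadj.symm), hyN1⟩
          rw [hempty] at this
          exact absurd this (Finset.notMem_empty y)
        · have hzE : Even (d z) := hzc.resolve_right hza2
          exact (hparity y z hadj).1 hyE hzE
      · exact (hparity y z hadj).1 hyE hzE
  -- the independent set
  set S0 : Finset V := X ∪ (M \ A2).image f with hS0
  have hS0P : ∀ y ∈ S0, P y := by
    intro y hy
    rcases Finset.mem_union.1 hy with hyX | hyI
    · exact Or.inl hyX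
    · obtain ⟨m, hm, rfl⟩ := Finset.mem_image.1 hyI
      rcases hfspec m hm with ⟨heq, hc⟩ | ⟨hmE, hma2, hadj, hN1⟩
      · rw [heq]
        have hm' := Finset.mem_sdiff.1 hm
        exact Or.inr (Or.inl ⟨hm'.1, hm'.2, hc⟩)
      · refine Or.inr (Or.inr ⟨hN1, ?_⟩)
        have := hparity m (f m) hadj
        tauto
  have hS0indep : ∀ u ∈ S0, ∀ v ∈ S0, ¬ G.Adj u v := by
    intro u hu v hv
    exact master u v (hS0P u hu) (hS0P v hv)
  -- cardinality of S0
  have hdisj : Disjoint X ((M \ A2).image f) := by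
    rw [Finset.disjoint_left]
    intro x hx hxI
    obtain ⟨m, hm, heq⟩ := Finset.mem_image.1 hxI
    rcases hfspec m hm with ⟨heq', -⟩ | ⟨-, -, -, hN1⟩
    · have hxM : x ∈ M := by
        rw [← heq, heq']
        exact (Finset.mem_sdiff.1 hm).1
      exact hXnotM x hx hxM
    · rw [heq] at hN1
      have h1 := (mem_N1.1 hN1).2
      have h2 := (mem_N2.1 (hX hx)).2
      omega
  have hinj : Set.InjOn f ↑(M \ A2) := by
    intro m1 h1 m2 h2 heq
    have h1' : m1 ∈ M \ A2 := h1
    have h2' : m2 ∈ M \ A2 := h2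
    rcases hfspec m1 h1' with ⟨he1, -⟩ | ⟨-, -, hadj1, hN11⟩
    · rcases hfspec m2 h2' with ⟨he2, -⟩ | ⟨-, -, hadj2, hN12⟩
      · rw [he1, he2] at heq; exact heq
      · rw [he1] at heq
        rw [heq] at h1'
        exact absurd (Finset.mem_sdiff.1 h1').1 (N1_notMem hN12)
    · rcases hfspec m2 h2' with ⟨he2, -⟩ | ⟨-, -, hadj2, hN12⟩
      · rw [he2] at heq
        rw [← heq] at h2'
        exact absurd (Finset.mem_sdiff.1 h2').1 (N1_notMem hN11)
      · rw [← heq] at hadj2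
        exact N1_unique hN11 (Finset.mem_sdiff.1 h1').1 hadj1
          (Finset.mem_sdiff.1 h2').1 hadj2
  have hcard : S0.card = X.card + (M.card - A2.card) := by
    rw [hS0, Finset.card_union_of_disjoint hdisj, Finset.card_image_of_injOn hinj,
      Finset.card_sdiff_of_subset hA2subM]
  obtain ⟨M', hM', hle⟩ := exists_minimalDomSet_ge_of_indep S0 hS0indep
  refine ⟨M', hM', ?_⟩
  have hA2le : A2.card ≤ M.card := Finset.card_le_card hA2subM
  have : X.card + (M.card - A2.card) ≤ M'.card := hcard ▸ hle
  omega
end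

section
/- Let T be a finite tree and M a minimal dominating set of T. Let ρ_1(M) be the maximum size of a matching in T all of whose edges join a vertex of N_1(M) to a vertex of a_1(M), and let ρ_2(M) be the maximum size of a matching in T all of whose edges join a vertex of N_2(M) to a vertex of a_2(M). Then (|N_1(M)| − ρ_1(M)) + (|N_2(M)| − ρ_2(M)) ≤ 2(Γ(T) − |M|). -/
open scoped Classical

variable {V : Type*} [Fintype V] [DecidableEq V]

/-- The maximum size of a matching of `G` all of whose edges join a vertex of `Nset`
to a vertex of `Aset`. -/
noncomputable def rho (G : SimpleGraph V) (Nset Aset : Finset V) : ℕ :=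
  sSup {m | ∃ P : Finset (V × V), P.card = m ∧
    (∀ p ∈ P, p.1 ∈ Nset ∧ p.2 ∈ Aset ∧ G.Adj p.1 p.2) ∧
    (∀ p ∈ P, ∀ q ∈ P, p ≠ q → p.1 ≠ q.1 ∧ p.2 ≠ q.2 ∧ p.1 ≠ q.2 ∧ p.2 ≠ q.1)}


section AuxLemmas

set_option linter.unusedSectionVars false
set_option maxHeartbeats 1000000

variable {G : SimpleGraph V} {M : Finset V}

/-- In a tree, adjacent vertices cannot be equidistant from `r`. -/
lemma tree_adj_dist_ne (hT : G.IsTree) (r u v : V) (h : G.Adj u v) :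
    G.dist u r ≠ G.dist v r := by
  intro heq
  obtain ⟨p, hp, hlen⟩ := hT.isConnected.exists_path_of_dist v r
  by_cases hu : u ∈ p.support
  · have hne : v ≠ u := fun e => G.irrefl (e ▸ h)
    have hdrop : G.dist u r ≤ (p.dropUntil u hu).length := SimpleGraph.dist_le _
    have hspec := congrArg SimpleGraph.Walk.length (p.take_spec hu)
    rw [SimpleGraph.Walk.length_append] at hspec
    have htake : (p.takeUntil u hu).length ≠ 0 := fun h0 =>
      hne (SimpleGraph.Walk.eq_of_length_eq_zero h0)
    omega
  · have hq : (SimpleGraph.Walk.cons h p).IsPath :=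
      (SimpleGraph.Walk.cons_isPath_iff h p).2 ⟨hp, hu⟩
    obtain ⟨q2, hq2, hlen2⟩ := hT.isConnected.exists_path_of_dist u r
    have heqp := hT.IsAcyclic.path_unique ⟨SimpleGraph.Walk.cons h p, hq⟩ ⟨q2, hq2⟩
    have hl : (SimpleGraph.Walk.cons h p).length = q2.length := by
      rw [Subtype.ext_iff] at heqp
      exact congrArg SimpleGraph.Walk.length heqp
    simp only [SimpleGraph.Walk.length_cons] at hl
    omega

/-- In a tree, an adjacent vertex not farther from `r` is exactly one step closer. -/
lemma tree_adj_dist_eq (hT : G.IsTree) (r u v : V) (h : G.Adj u v)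
    (hle : G.dist v r ≤ G.dist u r) : G.dist v r + 1 = G.dist u r := by
  obtain ⟨p, hp, hlen⟩ := hT.isConnected.exists_path_of_dist v r
  have hup : G.dist u r ≤ 1 + G.dist v r := by
    have hw := SimpleGraph.dist_le (SimpleGraph.Walk.cons h p)
    rw [SimpleGraph.Walk.length_cons] at hw
    omega
  have hne := tree_adj_dist_ne hT r u v h
  omega

/-- In a tree, the neighbour one step closer to `r` is unique. -/
lemma tree_parent_unique (hT : G.IsTree) (r u v w : V) (hv : G.Adj u v) (hw : G.Adj u w)
    (hdv : G.dist v r + 1 = G.dist u r) (hdw : G.dist w r + 1 = G.dist u r) : v = w := by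
  obtain ⟨pv, hpv, hlv⟩ := hT.isConnected.exists_path_of_dist v r
  obtain ⟨pw, hpw, hlw⟩ := hT.isConnected.exists_path_of_dist w r
  have hupv : u ∉ pv.support := by
    intro hu
    have hdrop : G.dist u r ≤ (pv.dropUntil u hu).length := SimpleGraph.dist_le _
    have hspec := congrArg SimpleGraph.Walk.length (pv.take_spec hu)
    rw [SimpleGraph.Walk.length_append] at hspec
    have hne : v ≠ u := fun e => G.irrefl (e ▸ hv)
    have htake : (pv.takeUntil u hu).length ≠ 0 := fun h0 =>
      hne (SimpleGraph.Walk.eq_of_length_eq_zero h0)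
    omega
  have hupw : u ∉ pw.support := by
    intro hu
    have hdrop : G.dist u r ≤ (pw.dropUntil u hu).length := SimpleGraph.dist_le _
    have hspec := congrArg SimpleGraph.Walk.length (pw.take_spec hu)
    rw [SimpleGraph.Walk.length_append] at hspec
    have hne : w ≠ u := fun e => G.irrefl (e ▸ hw)
    have htake : (pw.takeUntil u hu).length ≠ 0 := fun h0 =>
      hne (SimpleGraph.Walk.eq_of_length_eq_zero h0)
    omega
  have hq1 : (SimpleGraph.Walk.cons hv pv).IsPath :=
    (SimpleGraph.Walk.cons_isPath_iff hv pv).2 ⟨hpv, hupv⟩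
  have hq2 : (SimpleGraph.Walk.cons hw pw).IsPath :=
    (SimpleGraph.Walk.cons_isPath_iff hw pw).2 ⟨hpw, hupw⟩
  have heqp := hT.IsAcyclic.path_unique ⟨SimpleGraph.Walk.cons hv pv, hq1⟩
    ⟨SimpleGraph.Walk.cons hw pw, hq2⟩
  rw [Subtype.ext_iff] at heqp
  have hsupp := congrArg SimpleGraph.Walk.support heqp
  rw [SimpleGraph.Walk.support_cons, SimpleGraph.Walk.support_cons,
    pv.support_eq_cons, pw.support_eq_cons] at hsupp
  have h2 := (List.cons_eq_cons.mp hsupp).2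
  exact (List.cons_eq_cons.mp h2).1

/-- Key induction: in a tree there are an independent set `S` and a matching `F`
inside any vertex set `U` with `|S| + |F| ≥ |U|`. -/
lemma tree_indep_matching (hT : G.IsTree) (r : V) :
    ∀ (n : ℕ) (U : Finset V), U.card ≤ n →
    ∃ (S : Finset V) (F : Finset (V × V)),
      S ⊆ U ∧ (∀ x ∈ S, ∀ y ∈ S, ¬ G.Adj x y) ∧
      (∀ p ∈ F, p.1 ∈ U ∧ p.2 ∈ U ∧ G.Adj p.1 p.2) ∧
      (∀ p ∈ F, ∀ q ∈ F, p ≠ q → p.1 ≠ q.1 ∧ p.2 ≠ q.2 ∧ p.1 ≠ q.2 ∧ p.2 ≠ q.1) ∧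
      U.card ≤ S.card + F.card := by
  intro n
  induction n with
  | zero =>
    intro U hU
    refine ⟨∅, ∅, ?_, ?_, ?_, ?_, ?_⟩ <;> simp_all
  | succ n ih =>
    intro U hU
    by_cases hedge : ∃ u ∈ U, ∃ v ∈ U, G.Adj u v
    · set T' : Finset V := U.filter (fun u => ∃ v ∈ U, G.Adj u v) with hT'
      have hT'ne : T'.Nonempty := by
        obtain ⟨u, hu, v, hv, huv⟩ := hedge
        exact ⟨u, by simp [hT', hu]; exact ⟨v, hv, huv⟩⟩
      obtain ⟨u, huT', hmax⟩ := T'.exists_max_image (fun u => G.dist u r) hT'ne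
      rw [hT', Finset.mem_filter] at huT'
      obtain ⟨huU, v, hvU, huv⟩ := huT'
      have huniq : ∀ v' ∈ U, G.Adj u v' → v' = v := by
        intro v' hv'U hv'
        have hmem : ∀ w ∈ U, G.Adj u w → G.dist w r + 1 = G.dist u r := by
          intro w hwU hw
          have hwT' : w ∈ T' := by
            rw [hT', Finset.mem_filter]
            exact ⟨hwU, u, huU, hw.symm⟩
          exact tree_adj_dist_eq hT r u w hw (hmax w hwT')
        exact tree_parent_unique hT r u v' v hv' huv (hmem v' hv'U hv') (hmem v hvU huv)
      have hvu : v ≠ u := fun e => G.irrefl (e ▸ huv)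
      set U' : Finset V := (U.erase u).erase v with hU'
      have hU'card : U'.card + 2 = U.card := by
        rw [hU', Finset.card_erase_of_mem (Finset.mem_erase.2 ⟨hvu, hvU⟩),
          Finset.card_erase_of_mem huU]
        have h1 : 0 < (U.erase u).card := Finset.card_pos.2 ⟨v, Finset.mem_erase.2 ⟨hvu, hvU⟩⟩
        have h2 := Finset.card_erase_of_mem huU
        have h3 : 0 < U.card := Finset.card_pos.2 ⟨u, huU⟩
        omega
      have hU'sub : U' ⊆ U := fun x hx =>
        Finset.mem_of_mem_erase (Finset.mem_of_mem_erase hx)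
      have huU' : u ∉ U' := fun hx => (Finset.mem_erase.1 (Finset.mem_erase.1 hx).2).1 rfl
      have hvU' : v ∉ U' := fun hx => (Finset.mem_erase.1 hx).1 rfl
      obtain ⟨S', F', hS'sub, hS'ind, hF'mem, hF'dis, hcard⟩ := ih U' (by omega)
      refine ⟨insert u S', insert (u, v) F', ?_, ?_, ?_, ?_, ?_⟩
      · intro x hx
        rcases Finset.mem_insert.1 hx with rfl | hx
        · exact huU
        · exact hU'sub (hS'sub hx)
      · intro x hx y hy hxy
        have hux : ∀ z ∈ S', ¬ G.Adj u z := by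
          intro z hz hadj
          have hzv : z = v := huniq z (hU'sub (hS'sub hz)) hadj
          exact hvU' (hzv ▸ hS'sub hz)
        by_cases hxu : x = u
        · by_cases hyu : y = u
          · rw [hxu, hyu] at hxy; exact G.irrefl hxy
          · have hy' : y ∈ S' := (Finset.mem_insert.1 hy).resolve_left hyu
            rw [hxu] at hxy; exact hux y hy' hxy
        · have hx' : x ∈ S' := (Finset.mem_insert.1 hx).resolve_left hxu
          by_cases hyu : y = u
          · rw [hyu] at hxy; exact hux x hx' hxy.symm
          · exact hS'ind x hx' y ((Finset.mem_insert.1 hy).resolve_left hyu) hxy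
      · intro p hp
        rcases Finset.mem_insert.1 hp with rfl | hp
        · exact ⟨huU, hvU, huv⟩
        · obtain ⟨h1, h2, h3⟩ := hF'mem p hp
          exact ⟨hU'sub h1, hU'sub h2, h3⟩
      · intro p hp q hq hpq
        rcases Finset.mem_insert.1 hp with rfl | hp <;>
          rcases Finset.mem_insert.1 hq with rfl | hq
        · exact absurd rfl hpq
        · obtain ⟨h1, h2, _⟩ := hF'mem q hq
          exact ⟨fun e => huU' (by rw [← e] at h1; exact h1),
            fun e => hvU' (by rw [← e] at h2; exact h2),
            fun e => huU' (by rw [← e] at h2; exact h2),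
            fun e => hvU' (by rw [← e] at h1; exact h1)⟩
        · obtain ⟨h1, h2, _⟩ := hF'mem p hp
          exact ⟨fun e => huU' (by rw [e] at h1; exact h1),
            fun e => hvU' (by rw [e] at h2; exact h2),
            fun e => hvU' (by rw [e] at h1; exact h1),
            fun e => huU' (by rw [e] at h2; exact h2)⟩
        · exact hF'dis p hp q hq hpq
      · have huS' : u ∉ S' := fun h => huU' (hS'sub h)
        have huvF' : (u, v) ∉ F' := fun h => huU' (hF'mem _ h).1
        rw [Finset.card_insert_of_notMem huS', Finset.card_insert_of_notMem huvF']
        omega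
    · refine ⟨U, ∅, Finset.Subset.refl U, ?_, by simp, by simp, by simp⟩
      intro x hx y hy hxy
      exact hedge ⟨x, hx, y, hy, hxy⟩

/-- Any independent set extends to a minimal dominating set. -/
lemma exists_indep_minimalDomSet_superset (S0 : Finset V)
    (h0 : ∀ x ∈ S0, ∀ y ∈ S0, ¬ G.Adj x y) :
    ∃ S : Finset V, S0 ⊆ S ∧ MinimalDomSet G S := by
  set 𝒮 : Finset (Finset V) :=
    Finset.univ.filter (fun S => S0 ⊆ S ∧ ∀ x ∈ S, ∀ y ∈ S, ¬ G.Adj x y) with h𝒮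
  have hne : 𝒮.Nonempty := ⟨S0, by
    rw [h𝒮, Finset.mem_filter]
    exact ⟨Finset.mem_univ _, Finset.Subset.refl _, h0⟩⟩
  obtain ⟨S, hS, hmax⟩ := 𝒮.exists_max_image Finset.card hne
  rw [h𝒮, Finset.mem_filter] at hS
  obtain ⟨-, hsub, hind⟩ := hS
  have hdom : IsDomSet G S := by
    intro v
    by_contra hcon
    push_neg at hcon
    obtain ⟨hvS, hnadj⟩ := hcon
    have hmem : insert v S ∈ 𝒮 := by
      rw [h𝒮, Finset.mem_filter]
      refine ⟨Finset.mem_univ _, fun x hx => Finset.mem_insert_of_mem (hsub hx), ?_⟩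
      intro x hx y hy hxy
      by_cases hxv : x = v
      · by_cases hyv : y = v
        · rw [hxv, hyv] at hxy; exact G.irrefl hxy
        · have hy' : y ∈ S := (Finset.mem_insert.1 hy).resolve_left hyv
          rw [hxv] at hxy; exact hnadj y hy' hxy.symm
      · have hx' : x ∈ S := (Finset.mem_insert.1 hx).resolve_left hxv
        by_cases hyv : y = v
        · rw [hyv] at hxy; exact hnadj x hx' hxy
        · exact hind x hx' y ((Finset.mem_insert.1 hy).resolve_left hyv) hxy
    have hc := hmax _ hmem
    rw [Finset.card_insert_of_notMem hvS] at hc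
    omega
  refine ⟨S, hsub, hdom, ?_⟩
  intro T hTs hTdom
  obtain ⟨s, hsS, hsT⟩ := Finset.exists_of_ssubset hTs
  rcases hTdom s with hs | ⟨u, huT, hus⟩
  · exact hsT hs
  · exact hind u (hTs.1 huT) s hsS hus

lemma minimalDomSet_card_le_bigGamma (S : Finset V) (h : MinimalDomSet G S) :
    S.card ≤ bigGamma G := by
  apply le_csSup
  · exact ⟨Fintype.card V, fun k ⟨T, _, hcard⟩ => hcard ▸ Finset.card_le_univ T⟩
  · exact ⟨S, h, rfl⟩

lemma card_le_rho (Nset Aset : Finset V) (P : Finset (V × V))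
    (h1 : ∀ p ∈ P, p.1 ∈ Nset ∧ p.2 ∈ Aset ∧ G.Adj p.1 p.2)
    (h2 : ∀ p ∈ P, ∀ q ∈ P, p ≠ q → p.1 ≠ q.1 ∧ p.2 ≠ q.2 ∧ p.1 ≠ q.2 ∧ p.2 ≠ q.1) :
    P.card ≤ rho G Nset Aset := by
  apply le_csSup
  · exact ⟨Fintype.card (V × V), fun k ⟨Q, hcard, _⟩ => hcard ▸ Finset.card_le_univ Q⟩
  · exact ⟨P, rfl, h1, h2⟩

lemma aSet_eq_self (hM : MinimalDomSet G M) : aSet G M = M := by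
  rw [aSet]
  apply Finset.filter_true_of_mem
  intro v hv
  exact hM.2 (M.erase v) (Finset.erase_ssubset hv)

lemma a1_a2_card (hM : MinimalDomSet G M) :
    (a1Set G M).card + (a2Set G M).card = M.card := by
  have h2 : a2Set G M =
      (aSet G M).filter (fun v => ¬ (closedNbhd G v ∩ N1Set G M).Nonempty) := by
    apply Finset.filter_congr
    intro v _
    rw [Finset.not_nonempty_iff_eq_empty]
  rw [a1Set, h2, Finset.card_filter_add_card_filter_not, aSet_eq_self hM]

lemma N1_N2_card (hdom : IsDomSet G M) :
    (N1Set G M).card + (N2Set G M).card + M.card = Fintype.card V := by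
  set A : Finset V := Finset.univ.filter (fun v => v ∉ M) with hA
  have h1 : N1Set G M = A.filter (fun v => (closedNbhd G v ∩ M).card = 1) := by
    ext v
    simp only [N1Set, hA, Finset.mem_filter, Finset.mem_univ, true_and, and_assoc]
  have hpos : ∀ v, v ∉ M → 1 ≤ (closedNbhd G v ∩ M).card := by
    intro v hv
    rcases hdom v with h | ⟨u, huM, hu⟩
    · exact absurd h hv
    · refine Finset.card_pos.2 ⟨u, Finset.mem_inter.2 ⟨?_, huM⟩⟩
      simp only [closedNbhd, Finset.mem_filter, Finset.mem_univ, true_and]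
      exact Or.inr hu.symm
  have h2 : N2Set G M = A.filter (fun v => ¬ (closedNbhd G v ∩ M).card = 1) := by
    ext v
    simp only [N2Set, hA, Finset.mem_filter, Finset.mem_univ, true_and]
    constructor
    · rintro ⟨hv, hc⟩
      exact ⟨hv, by omega⟩
    · rintro ⟨hv, hc⟩
      have := hpos v hv
      exact ⟨hv, by omega⟩
  have h3 : (N1Set G M).card + (N2Set G M).card = A.card := by
    rw [h1, h2, Finset.card_filter_add_card_filter_not]
  have h4 : A = Mᶜ := by
    ext v
    simp [hA]
  have h5 : A.card = Fintype.card V - M.card := by rw [h4, Finset.card_compl]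
  have h6 : M.card ≤ Fintype.card V := by
    simpa using Finset.card_le_univ M
  omega

lemma a1_subset_M (hM : MinimalDomSet G M) : a1Set G M ⊆ M := by
  rw [a1Set, aSet_eq_self hM]
  exact Finset.filter_subset _ _

lemma a2_subset_M (hM : MinimalDomSet G M) : a2Set G M ⊆ M := by
  rw [a2Set, aSet_eq_self hM]
  exact Finset.filter_subset _ _

lemma N1_notMem_M {v : V} (h : v ∈ N1Set G M) : v ∉ M := by
  rw [N1Set, Finset.mem_filter] at h
  exact h.2.1

lemma N2_notMem_M {v : V} (h : v ∈ N2Set G M) : v ∉ M := by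
  rw [N2Set, Finset.mem_filter] at h
  exact h.2.1

/-- Every neighbour of an `a₂` vertex lies in `N₂`. -/
lemma a2_adj_mem_N2 (hM : MinimalDomSet G M) {w x : V} (hw : w ∈ a2Set G M)
    (hadj : G.Adj w x) : x ∈ N2Set G M := by
  rw [a2Set, Finset.mem_filter, aSet, Finset.mem_filter] at hw
  obtain ⟨⟨hwM, hnd⟩, hempty⟩ := hw
  rw [IsDomSet] at hnd; push_neg at hnd
  obtain ⟨z, hz1, hz2⟩ := hnd
  have hzw : z = w := by
    by_contra hne
    have hzM : z ∉ M := fun h => hz1 (Finset.mem_erase.2 ⟨hne, h⟩)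
    have hadjwz : G.Adj w z := by
      rcases hM.1 z with h | ⟨u, huM, hu⟩
      · exact absurd h hzM
      · rcases eq_or_ne u w with rfl | hne2
        · exact hu
        · exact absurd hu (hz2 u (Finset.mem_erase.2 ⟨hne2, huM⟩))
    have hzN1 : z ∈ N1Set G M := by
      rw [N1Set, Finset.mem_filter]
      refine ⟨Finset.mem_univ _, hzM, ?_⟩
      have hsingle : closedNbhd G z ∩ M = {w} := by
        ext y
        simp only [closedNbhd, Finset.mem_inter, Finset.mem_filter, Finset.mem_univ,
          true_and, Finset.mem_singleton]
        constructor
        · rintro ⟨hy1 | hy2, hyM⟩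
          · exact absurd (hy1 ▸ hyM) hzM
          · rcases eq_or_ne y w with rfl | hne2
            · rfl
            · exact absurd hy2.symm (hz2 y (Finset.mem_erase.2 ⟨hne2, hyM⟩))
        · rintro rfl
          exact ⟨Or.inr hadjwz.symm, hwM⟩
      rw [hsingle, Finset.card_singleton]
    have hzmem : z ∈ closedNbhd G w ∩ N1Set G M := by
      rw [Finset.mem_inter]
      refine ⟨?_, hzN1⟩
      simp only [closedNbhd, Finset.mem_filter, Finset.mem_univ, true_and]
      exact Or.inr hadjwz
    rw [hempty] at hzmem
    exact absurd hzmem (Finset.notMem_empty z)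
  rw [hzw] at hz2
  have hxM : x ∉ M := by
    intro hxMmem
    have hxw : x ≠ w := fun e => G.irrefl (e ▸ hadj)
    exact hz2 x (Finset.mem_erase.2 ⟨hxw, hxMmem⟩) hadj.symm
  have hxN1 : x ∉ N1Set G M := by
    intro hxN1mem
    have hxmem : x ∈ closedNbhd G w ∩ N1Set G M := by
      rw [Finset.mem_inter]
      refine ⟨?_, hxN1mem⟩
      simp only [closedNbhd, Finset.mem_filter, Finset.mem_univ, true_and]
      exact Or.inr hadj
    rw [hempty] at hxmem
    exact absurd hxmem (Finset.notMem_empty x)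
  rw [N2Set, Finset.mem_filter]
  refine ⟨Finset.mem_univ _, hxM, ?_⟩
  have hwmem : w ∈ closedNbhd G x ∩ M := by
    rw [Finset.mem_inter]
    refine ⟨?_, hwM⟩
    simp only [closedNbhd, Finset.mem_filter, Finset.mem_univ, true_and]
    exact Or.inr hadj.symm
  have hge1 : 1 ≤ (closedNbhd G x ∩ M).card := Finset.card_pos.2 ⟨w, hwmem⟩
  have hne1 : (closedNbhd G x ∩ M).card ≠ 1 := by
    intro h1
    apply hxN1
    rw [N1Set, Finset.mem_filter]
    exact ⟨Finset.mem_univ _, hxM, h1⟩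
  omega

/-- `ρ₁ ≥ |a₁|`: every `a₁` vertex has a private `N₁` neighbour. -/
lemma a1_card_le_rho (hM : MinimalDomSet G M) :
    (a1Set G M).card ≤ rho G (N1Set G M) (a1Set G M) := by
  have hpriv : ∀ v ∈ a1Set G M, ∃ u, u ∈ N1Set G M ∧ G.Adj u v := by
    intro v hv
    have hvM : v ∈ M := a1_subset_M hM hv
    rw [a1Set, Finset.mem_filter] at hv
    obtain ⟨-, u, hu⟩ := hv
    rw [Finset.mem_inter] at hu
    obtain ⟨hu1, hu2⟩ := hu
    simp only [closedNbhd, Finset.mem_filter, Finset.mem_univ, true_and] at hu1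
    rcases hu1 with rfl | hadj
    · exact absurd hvM (N1_notMem_M hu2)
    · exact ⟨u, hu2, hadj.symm⟩
  choose f hf1 hf2 using hpriv
  set g : V → V := fun v => if h : v ∈ a1Set G M then f v h else v with hg
  set P : Finset (V × V) := (a1Set G M).image (fun v => (g v, v)) with hP
  have hinj : ∀ x ∈ a1Set G M, ∀ y ∈ a1Set G M, (g x, x) = (g y, y) → x = y :=
    fun x _ y _ h => congrArg Prod.snd h
  have hPcard : P.card = (a1Set G M).card := Finset.card_image_of_injOn hinj
  have hmem : ∀ p ∈ P, p.1 ∈ N1Set G M ∧ p.2 ∈ a1Set G M ∧ G.Adj p.1 p.2 := by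
    intro p hp
    obtain ⟨v, hv, hpv⟩ := Finset.mem_image.1 hp
    have hgv : g v = f v hv := dif_pos hv
    subst hpv
    exact ⟨by rw [hgv]; exact hf1 v hv, hv, by rw [hgv]; exact hf2 v hv⟩
  have hdis : ∀ p ∈ P, ∀ q ∈ P, p ≠ q → p.1 ≠ q.1 ∧ p.2 ≠ q.2 ∧ p.1 ≠ q.2 ∧ p.2 ≠ q.1 := by
    intro p hp q hq hpq
    obtain ⟨v, hv, hpv⟩ := Finset.mem_image.1 hp
    obtain ⟨v', hv', hqv⟩ := Finset.mem_image.1 hq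
    subst hpv; subst hqv
    have hvv' : v ≠ v' := fun e => hpq (by rw [e])
    have hgv : g v = f v hv := dif_pos hv
    have hgv' : g v' = f v' hv' := dif_pos hv'
    refine ⟨?_, hvv', ?_, ?_⟩
    · -- g v ≠ g v' since the N1 vertex has a unique closed neighbour in M
      intro he
      have hu1 : f v hv ∈ N1Set G M := hf1 v hv
      rw [N1Set, Finset.mem_filter] at hu1
      obtain ⟨-, -, hcard1⟩ := hu1
      have hvmem : v ∈ closedNbhd G (f v hv) ∩ M := by
        rw [Finset.mem_inter]
        refine ⟨?_, a1_subset_M hM hv⟩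
        simp only [closedNbhd, Finset.mem_filter, Finset.mem_univ, true_and]
        exact Or.inr (hf2 v hv)
      have hv'mem : v' ∈ closedNbhd G (f v hv) ∩ M := by
        have he' : f v hv = f v' hv' := by rw [← hgv, ← hgv']; exact he
        rw [Finset.mem_inter]
        refine ⟨?_, a1_subset_M hM hv'⟩
        simp only [closedNbhd, Finset.mem_filter, Finset.mem_univ, true_and]
        rw [he']
        exact Or.inr (hf2 v' hv')
      exact hvv' (Finset.card_le_one.1 (le_of_eq hcard1) v hvmem v' hv'mem)
    · intro he
      have hn : g v ∈ N1Set G M := by rw [hgv]; exact hf1 v hv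
      have he2 : g v = v' := he
      have hm := a1_subset_M hM hv'
      rw [← he2] at hm
      exact N1_notMem_M hn hm
    · intro he
      have hn : g v' ∈ N1Set G M := by rw [hgv']; exact hf1 v' hv'
      have he2 : v = g v' := he
      have hm := a1_subset_M hM hv
      rw [he2] at hm
      exact N1_notMem_M hn hm
  calc (a1Set G M).card = P.card := hPcard.symm
    _ ≤ rho G (N1Set G M) (a1Set G M) := card_le_rho _ _ P hmem hdis

end AuxLemmas
theorem unmatched_le_twice_gap (G : SimpleGraph V) (hT : G.IsTree)
    (M : Finset V) (hM : MinimalDomSet G M) :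
    ((N1Set G M).card : ℤ) - (rho G (N1Set G M) (a1Set G M) : ℤ) +
        (((N2Set G M).card : ℤ) - (rho G (N2Set G M) (a2Set G M) : ℤ)) ≤
      2 * ((bigGamma G : ℤ) - (M.card : ℤ)) := by
    classical
  obtain ⟨r⟩ := hT.isConnected.nonempty
  obtain ⟨S, F, hSsub, hSind, hFmem, hFdis, hScard⟩ :=
    tree_indep_matching hT r (Fintype.card V) Finset.univ (by simp)
  obtain ⟨S', hS'sub, hS'min⟩ := exists_indep_minimalDomSet_superset S hSind
  have hGamma : S'.card ≤ bigGamma G := minimalDomSet_card_le_bigGamma S' hS'min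
  have hSS' : S.card ≤ S'.card := Finset.card_le_card hS'sub
  rw [Finset.card_univ] at hScard
  have hN := N1_N2_card (G := G) (M := M) hM.1
  have hA := a1_a2_card (G := G) (M := M) hM
  have hrho1 := a1_card_le_rho (G := G) (M := M) hM
  -- endpoints of the matching F
  set E : Finset V := F.image Prod.fst ∪ F.image Prod.snd with hE
  have hfstcard : (F.image Prod.fst).card = F.card := Finset.card_image_of_injOn (by
    intro p hp q hq h
    by_contra hne
    exact (hFdis p hp q hq hne).1 h)
  have hsndcard : (F.image Prod.snd).card = F.card := Finset.card_image_of_injOn (by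
    intro p hp q hq h
    by_contra hne
    exact (hFdis p hp q hq hne).2.1 h)
  have hdisjE : Disjoint (F.image Prod.fst) (F.image Prod.snd) := by
    rw [Finset.disjoint_left]
    intro x hx1 hx2
    obtain ⟨p, hp, hpx⟩ := Finset.mem_image.1 hx1
    obtain ⟨q, hq, hqx⟩ := Finset.mem_image.1 hx2
    rcases eq_or_ne p q with rfl | hne
    · have h12 : p.1 = p.2 := by rw [hpx, hqx]
      have hadj := (hFmem p hp).2.2
      rw [h12] at hadj
      exact G.irrefl hadj
    · exact (hFdis p hp q hq hne).2.2.1 (by rw [hpx, ← hqx])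
  have hEcard : E.card = 2 * F.card := by
    rw [hE, Finset.card_union_of_disjoint hdisjE, hfstcard, hsndcard]
    ring
  set mat : Finset V := (a2Set G M).filter (fun w => w ∈ E) with hmat
  set unm : Finset V := (a2Set G M).filter (fun w => ¬ w ∈ E) with hunm
  have hsplit : mat.card + unm.card = (a2Set G M).card := by
    rw [hmat, hunm, Finset.card_filter_add_card_filter_not]
  have hdisj2 : Disjoint E unm := by
    rw [Finset.disjoint_right]
    intro x hx
    exact (Finset.mem_filter.1 hx).2
  have hEU : 2 * F.card + unm.card ≤ Fintype.card V := by
    rw [← hEcard, ← Finset.card_union_of_disjoint hdisj2]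
    simpa using Finset.card_le_univ (E ∪ unm)
  -- every matched a2 vertex yields a rho2 pair
  have hpart : ∀ w ∈ mat, ∃ x, G.Adj w x ∧ x ∈ N2Set G M ∧
      ∃ p, p ∈ F ∧ ((p.1 = w ∧ p.2 = x) ∨ (p.2 = w ∧ p.1 = x)) := by
    intro w hw
    obtain ⟨hwa2, hwE⟩ := Finset.mem_filter.1 hw
    rcases Finset.mem_union.1 hwE with h | h
    · obtain ⟨p, hpF, hpw⟩ := Finset.mem_image.1 h
      have hadj : G.Adj w p.2 := by
        have hh := (hFmem p hpF).2.2
        rwa [hpw] at hh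
      exact ⟨p.2, hadj, a2_adj_mem_N2 hM hwa2 hadj, p, hpF, Or.inl ⟨hpw, rfl⟩⟩
    · obtain ⟨p, hpF, hpw⟩ := Finset.mem_image.1 h
      have hadj : G.Adj w p.1 := by
        have hh := (hFmem p hpF).2.2
        rw [hpw] at hh
        exact hh.symm
      exact ⟨p.1, hadj, a2_adj_mem_N2 hM hwa2 hadj, p, hpF, Or.inr ⟨hpw, rfl⟩⟩
  choose f hf1 hf2 hf3 using hpart
  set g : V → V := fun w => if h : w ∈ mat then f w h else w with hg
  set P2 : Finset (V × V) := mat.image (fun w => (g w, w)) with hP2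
  have hP2card : P2.card = mat.card :=
    Finset.card_image_of_injOn (fun x _ y _ h => congrArg Prod.snd h)
  have hmem2 : ∀ p ∈ P2, p.1 ∈ N2Set G M ∧ p.2 ∈ a2Set G M ∧ G.Adj p.1 p.2 := by
    intro p hp
    obtain ⟨w, hw, hpw⟩ := Finset.mem_image.1 hp
    have hgw : g w = f w hw := dif_pos hw
    subst hpw
    exact ⟨by rw [hgw]; exact hf2 w hw, (Finset.mem_filter.1 hw).1,
      by rw [hgw]; exact (hf1 w hw).symm⟩
  have hdis2 : ∀ p ∈ P2, ∀ q ∈ P2, p ≠ q →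
      p.1 ≠ q.1 ∧ p.2 ≠ q.2 ∧ p.1 ≠ q.2 ∧ p.2 ≠ q.1 := by
    intro p hp q hq hpq
    obtain ⟨w, hw, hpw⟩ := Finset.mem_image.1 hp
    obtain ⟨w', hw', hqw⟩ := Finset.mem_image.1 hq
    subst hpw; subst hqw
    have hww' : w ≠ w' := fun e => hpq (by rw [e])
    have hw2 : w ∈ a2Set G M := (Finset.mem_filter.1 hw).1
    have hw'2 : w' ∈ a2Set G M := (Finset.mem_filter.1 hw').1
    have hgw : g w = f w hw := dif_pos hw
    have hgw' : g w' = f w' hw' := dif_pos hw'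
    have hxM : f w hw ∉ M := N2_notMem_M (hf2 w hw)
    have hx'M : f w' hw' ∉ M := N2_notMem_M (hf2 w' hw')
    have hwM : w ∈ M := a2_subset_M hM hw2
    have hw'M : w' ∈ M := a2_subset_M hM hw'2
    refine ⟨?_, hww', ?_, ?_⟩
    · intro he
      have he2 : f w hw = f w' hw' := by rw [← hgw, ← hgw']; exact he
      obtain ⟨p0, hp0F, hp0pat⟩ := hf3 w hw
      obtain ⟨q0, hq0F, hq0pat⟩ := hf3 w' hw'
      rcases eq_or_ne p0 q0 with rfl | hne
      · rcases hp0pat with ⟨e1, e2⟩ | ⟨e1, e2⟩ <;> rcases hq0pat with ⟨e3, e4⟩ | ⟨e3, e4⟩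
        · exact hww' (by rw [← e1, ← e3])
        · exact hxM (by rw [← e2, e3]; exact hw'M)
        · exact hxM (by rw [← e2, e3]; exact hw'M)
        · exact hww' (by rw [← e1, ← e3])
      · obtain ⟨d1, d2, d3, d4⟩ := hFdis p0 hp0F q0 hq0F hne
        rcases hp0pat with ⟨e1, e2⟩ | ⟨e1, e2⟩ <;> rcases hq0pat with ⟨e3, e4⟩ | ⟨e3, e4⟩
        · exact d2 (by rw [e2, e4]; exact he2)
        · exact d4 (by rw [e2, e4]; exact he2)
        · exact d3 (by rw [e2, e4]; exact he2)
        · exact d1 (by rw [e2, e4]; exact he2)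
    · intro he
      have he2 : f w hw = w' := by rw [← hgw]; exact he
      have hm := hw'M
      rw [← he2] at hm
      exact hxM hm
    · intro he
      have he2 : w = f w' hw' := by rw [← hgw']; exact he
      have hm := hwM
      rw [he2] at hm
      exact hx'M hm
  have hrho2 : mat.card ≤ rho G (N2Set G M) (a2Set G M) := by
    rw [← hP2card]
    exact card_le_rho _ _ P2 hmem2 hdis2
  omega
end

section
/- If T is a finite tree, then for every dominating set S of T, |a(S)| ≤ 2Γ(T) − |S| (as integers). -/
open scoped Classical

variable {V : Type*} [Fintype V] [DecidableEq V]

/-!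
Every critical vertex `v` of `S` has a private neighbour `w`, i.e. `N[w] ∩ S = {v}`, and distinct
critical vertices have distinct private neighbours. A private neighbour lying in `S` is the vertex
itself, which then has no neighbour in `W = S ∪ {private neighbours}`. Hence
`|S| + |a(S)| ≤ |W| + |I|`, where `I` is the set of vertices isolated in `W`. Since the graph is
bipartite, the larger colour class `B` of `W \ I` has at least half its vertices, and `B ∪ I` is
independent; a maximal independent superset is a minimal dominating set, so
`|W| + |I| ≤ 2 (|B| + |I|) ≤ 2 Γ`.
-/

open Finset

namespace SimpleGraph

variable {α : Type*} {G : SimpleGraph α}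

lemma mem_closedNbhd [Fintype α] [DecidableEq α] {v u : α} :
    u ∈ closedNbhd G v ↔ u = v ∨ G.Adj v u := by
  simp [closedNbhd]

lemma le_bigGamma_of_minimalDomSet [Fintype α] {D : Finset α} (hD : MinimalDomSet G D) :
    D.card ≤ bigGamma G := by
  refine le_csSup ⟨Fintype.card α, ?_⟩ ⟨D, hD, rfl⟩
  rintro k ⟨T, -, rfl⟩
  exact T.card_le_univ

lemma minimalDomSet_of_isIndepSet {D : Finset α} (hI : G.IsIndepSet (D : Set α))
    (hD : IsDomSet G D) : MinimalDomSet G D := by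
  refine ⟨hD, fun T hTD hT => ?_⟩
  obtain ⟨v, hvD, hvT⟩ := exists_of_ssubset hTD
  rcases hT v with hv | ⟨u, huT, hadj⟩
  · exact hvT hv
  · exact hI (hTD.subset huT) hvD (ne_of_mem_of_not_mem huT hvT) hadj

lemma isDomSet_of_maximal_isIndepSet {D : Finset α}
    (hD : Maximal (fun J : Finset α => G.IsIndepSet (J : Set α)) D) : IsDomSet G D := by
  intro v
  by_contra! hv
  obtain ⟨hvD, hnone⟩ := hv
  have hins : G.IsIndepSet (insert v D : Finset α) := by
    rw [coe_insert]
    exact hD.prop.insert fun u hu _ => ⟨fun h => hnone u hu h.symm, hnone u hu⟩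
  exact hvD (hD.le_of_ge hins (subset_insert v D) (mem_insert_self v D))

lemma card_le_bigGamma_of_isIndepSet [Fintype α] {I : Finset α}
    (hI : G.IsIndepSet (I : Set α)) : I.card ≤ bigGamma G := by
  obtain ⟨J, hIJ, hJ⟩ :=
    Finite.exists_le_maximal (p := fun J : Finset α => G.IsIndepSet (J : Set α)) hI
  calc I.card ≤ J.card := card_le_card hIJ
    _ ≤ bigGamma G := le_bigGamma_of_minimalDomSet
        (minimalDomSet_of_isIndepSet hJ.prop (isDomSet_of_maximal_isIndepSet hJ))

lemma exists_isIndepSet_subset_card_le_mul {n : ℕ} (hG : G.Colorable n) (X : Finset α) :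
    ∃ B ⊆ X, G.IsIndepSet (B : Set α) ∧ X.card ≤ n * B.card := by
  obtain ⟨c⟩ := hG
  rcases X.eq_empty_or_nonempty with rfl | ⟨x, -⟩
  · exact ⟨∅, subset_rfl, by simp, by simp⟩
  have hn : 0 < n := (c x).pos
  have : Nonempty (Fin n) := ⟨c x⟩
  obtain ⟨i, -, hi⟩ := exists_le_card_fiber_of_nsmul_le_card_of_maps_to (f := c)
    (b := (X.card / n : ℚ)) (fun _ _ => mem_univ _) univ_nonempty (by simp [field])
  refine ⟨X.filter (c · = i), filter_subset _ _, fun u hu w hw _ hadj => ?_, ?_⟩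
  · simp only [coe_filter, Set.mem_ofPred_eq] at hu hw
    exact c.valid hadj (hu.2.trans hw.2.symm)
  · rw [div_le_iff₀ (by exact_mod_cast hn), mul_comm] at hi
    exact_mod_cast hi

noncomputable def isolatedIn (G : SimpleGraph α) (W : Finset α) : Finset α :=
  W.filter fun v => ∀ u ∈ W, ¬ G.Adj u v

lemma mem_isolatedIn {W : Finset α} {v : α} :
    v ∈ isolatedIn G W ↔ v ∈ W ∧ ∀ u ∈ W, ¬ G.Adj u v :=
  mem_filter

lemma card_add_card_isolatedIn_le_two_mul_bigGamma [Fintype α] (hG : G.IsBipartite)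
    (W : Finset α) :
    W.card + (isolatedIn G W).card ≤ 2 * bigGamma G := by
  set I := isolatedIn G W
  have hIW : I ⊆ W := fun v hv => (mem_isolatedIn.mp hv).1
  obtain ⟨B, hBX, hB, hcard⟩ := exists_isIndepSet_subset_card_le_mul hG (W \ I)
  have hBW : B ⊆ W := hBX.trans sdiff_subset
  have hdisj : Disjoint B I := disjoint_of_subset_left hBX sdiff_disjoint
  have hindep : G.IsIndepSet ((B ∪ I : Finset α) : Set α) := by
    have hIsol : ∀ v ∈ I, ∀ u ∈ W, ¬ G.Adj u v := fun v hv => (mem_isolatedIn.mp hv).2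
    rw [coe_union, IsIndepSet, Set.pairwise_union]
    refine ⟨hB, fun u hu v hv _ hadj => hIsol v hv u (hIW hu) hadj, fun u hu v hv _ => ?_⟩
    exact ⟨hIsol v hv u (hBW hu), fun hadj => hIsol v hv u (hBW hu) hadj.symm⟩
  have hΓ := card_le_bigGamma_of_isIndepSet hindep
  rw [card_union_of_disjoint hdisj] at hΓ
  have := card_sdiff_add_card_eq_card hIW
  omega

lemma exists_closedNbhd_inter_eq_singleton [Fintype α] [DecidableEq α] {S : Finset α}
    (hS : IsDomSet G S) {v : α} (hv : v ∈ aSet G S) : ∃ w, closedNbhd G w ∩ S = {v} := by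
  obtain ⟨hvS, hnd⟩ := mem_filter.mp hv
  obtain ⟨w, hwS, hwN⟩ : ∃ w, w ∉ S.erase v ∧ ∀ u ∈ S.erase v, ¬ G.Adj u w := by
    simpa [IsDomSet] using hnd
  have hunique : ∀ u ∈ S, u ∈ closedNbhd G w → u = v := by
    intro u huS hu
    by_contra hne
    rcases mem_closedNbhd.mp hu with rfl | hadj
    · exact hwS (mem_erase.mpr ⟨hne, huS⟩)
    · exact hwN u (mem_erase.mpr ⟨hne, huS⟩) hadj.symm
  have hwv : w = v ∨ G.Adj v w := by
    rcases hS w with hw | ⟨u, huS, hadj⟩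
    · exact Or.inl (hunique w hw (mem_closedNbhd.mpr (Or.inl rfl)))
    · exact Or.inr (hunique u huS (mem_closedNbhd.mpr (Or.inr hadj.symm)) ▸ hadj)
  refine ⟨w, eq_singleton_iff_unique_mem.mpr ⟨?_, fun u hu => ?_⟩⟩
  · exact mem_inter.mpr ⟨mem_closedNbhd.mpr (hwv.imp Eq.symm Adj.symm), hvS⟩
  · exact hunique u (mem_inter.mp hu).2 (mem_inter.mp hu).1

lemma exists_card_add_card_aSet_le [Fintype α] [DecidableEq α] {S : Finset α}
    (hS : IsDomSet G S) :
    ∃ W : Finset α, S.card + (aSet G S).card ≤ W.card + (isolatedIn G W).card := by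
  set A := aSet G S
  choose! p hp using fun v (hv : v ∈ A) => exists_closedNbhd_inter_eq_singleton hS hv
  have hmem : ∀ v ∈ A, ∀ u ∈ S, u ∈ closedNbhd G (p v) → u = v := fun v hv u huS hu =>
    mem_singleton.mp (hp v hv ▸ mem_inter.mpr ⟨hu, huS⟩)
  set W := S ∪ A.image p
  have hinj : Set.InjOn p A := fun v hv v' hv' h =>
    singleton_injective ((hp v hv).symm.trans (h ▸ hp v' hv'))
  have hmaps : ∀ v ∈ A, p v ∈ (W \ S) ∪ isolatedIn G W := by
    intro v hv
    by_cases hpS : p v ∈ S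
    · have hpv : p v = v := hmem v hv _ hpS (mem_closedNbhd.mpr (Or.inl rfl))
      refine mem_union_right _ (mem_isolatedIn.mpr ⟨mem_union_left _ hpS, fun u huW hadj => ?_⟩)
      rcases mem_union.mp huW with huS | hu
      · have := hmem v hv u huS (mem_closedNbhd.mpr (Or.inr hadj.symm))
        exact G.irrefl (this ▸ hpv ▸ hadj)
      · obtain ⟨v', hv', rfl⟩ := mem_image.mp hu
        have hvv' := hmem v' hv' v (filter_subset _ _ hv)
          (mem_closedNbhd.mpr (Or.inr (hpv ▸ hadj)))
        exact G.irrefl (hvv' ▸ hadj)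
    · exact mem_union_left _ (mem_sdiff.mpr ⟨mem_union_right _ (mem_image_of_mem p hv), hpS⟩)
  refine ⟨W, ?_⟩
  have hA := card_le_card_of_injOn p hmaps hinj
  have := card_union_le (W \ S) (isolatedIn G W)
  have hSW : S ⊆ W := subset_union_left
  have := card_sdiff_add_card_eq_card hSW
  omega

end SimpleGraph

theorem aSet_card_upper_bound_of_tree (G : SimpleGraph V) (hT : G.IsTree)
    (S : Finset V) (hS : IsDomSet G S) :
    ((aSet G S).card : ℤ) ≤ 2 * (bigGamma G : ℤ) - (S.card : ℤ) := by
  obtain ⟨W, hW⟩ := SimpleGraph.exists_card_add_card_aSet_le hS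
  have := SimpleGraph.card_add_card_isolatedIn_le_two_mul_bigGamma hT.isBipartite W
  omega
end

section
/- Let T be a tree on n vertices and let avd(T) = (Σ_{S dominating set of T} |S|) / (number of dominating sets of T), viewed as a rational number. Then (n + 2γ(T))/3 ≤ avd(T) ≤ (n + 2Γ(T))/3. -/
open scoped Classical

variable {V : Type*} [Fintype V] [DecidableEq V]

/-- The average cardinality of a dominating set of `G`, as a rational number. -/
noncomputable def avd (G : SimpleGraph V) : ℚ :=
  (∑ S ∈ Finset.univ.filter (fun S : Finset V => IsDomSet G S), (S.card : ℚ)) /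
    ((Finset.univ.filter fun S : Finset V => IsDomSet G S).card : ℚ)



lemma exists_shortest_path (G : SimpleGraph V) (hc : G.Connected) (u r : V) :
    ∃ p : G.Walk u r, p.IsPath ∧ p.length = G.dist u r := by
  obtain ⟨p, hp⟩ := hc.exists_walk_length_eq_dist u r
  refine ⟨p.bypass, p.bypass_isPath, le_antisymm ?_ (SimpleGraph.dist_le _)⟩
  exact le_trans p.length_bypass_le hp.le

lemma path_length_eq_dist (G : SimpleGraph V) (hT : G.IsTree) {u r : V}
    (p : G.Walk u r) (hp : p.IsPath) : p.length = G.dist u r := by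
  obtain ⟨q, hq, hql⟩ := exists_shortest_path G hT.isConnected u r
  have := hT.IsAcyclic.path_unique ⟨p, hp⟩ ⟨q, hq⟩
  rw [← hql]
  exact congrArg (fun x : G.Path u r => x.1.length) this

/-- T1 : adjacent vertices have distances to r differing by exactly one. -/
lemma adj_dist_level (G : SimpleGraph V) (hT : G.IsTree) (r : V) {u x : V} (h : G.Adj u x) :
    G.dist u r = G.dist x r + 1 ∨ G.dist x r = G.dist u r + 1 := by
  obtain ⟨q, hq, hql⟩ := exists_shortest_path G hT.isConnected x r
  by_cases hu : u ∈ q.support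
  · right
    have hsplit := q.take_spec hu
    have hlen : (q.takeUntil u hu).length + (q.dropUntil u hu).length = q.length := by
      conv_rhs => rw [← hsplit]
      rw [SimpleGraph.Walk.length_append]
    have ht0 : (q.takeUntil u hu).length ≠ 0 := by
      intro h0
      have := SimpleGraph.Walk.eq_of_length_eq_zero h0
      exact h.ne this.symm
    have hd : G.dist u r ≤ (q.dropUntil u hu).length := SimpleGraph.dist_le _
    have hx : G.dist x r ≤ G.dist u r + 1 := by
      obtain ⟨p', hp', hpl'⟩ := exists_shortest_path G hT.isConnected u r
      have := SimpleGraph.dist_le (SimpleGraph.Walk.cons h.symm p')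
      simpa [hpl'] using this
    omega
  · left
    have hpath : (SimpleGraph.Walk.cons h q).IsPath := hq.cons hu
    have := path_length_eq_dist G hT _ hpath
    simp only [SimpleGraph.Walk.length_cons] at this
    omega

/-- T2 : the neighbour closer to the root is unique. -/
lemma parent_unique (G : SimpleGraph V) (hT : G.IsTree) (r : V) {u w w' : V}
    (hw : G.Adj u w) (hw' : G.Adj u w')
    (h1 : G.dist u r = G.dist w r + 1) (h2 : G.dist u r = G.dist w' r + 1) : w = w' := by
  obtain ⟨q, hq, hql⟩ := exists_shortest_path G hT.isConnected w r
  obtain ⟨q', hq', hql'⟩ := exists_shortest_path G hT.isConnected w' r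
  have hu : u ∉ q.support := by
    intro hu
    have hd : G.dist u r ≤ (q.dropUntil u hu).length := SimpleGraph.dist_le _
    have := q.length_dropUntil_le hu
    omega
  have hu' : u ∉ q'.support := by
    intro hu'
    have hd : G.dist u r ≤ (q'.dropUntil u hu').length := SimpleGraph.dist_le _
    have := q'.length_dropUntil_le hu'
    omega
  have hpq := hT.IsAcyclic.path_unique ⟨SimpleGraph.Walk.cons hw q, hq.cons hu⟩
    ⟨SimpleGraph.Walk.cons hw' q', hq'.cons hu'⟩
  have := congrArg (fun x : G.Path u r => x.1.getVert 1) hpq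
  simpa using this

lemma isDomSet_mono {G : SimpleGraph V} {S T : Finset V} (h : S ⊆ T) (hS : IsDomSet G S) :
    IsDomSet G T := by
  intro v
  rcases hS v with hv | ⟨u, hu, hadj⟩
  · exact Or.inl (h hv)
  · exact Or.inr ⟨u, h hu, hadj⟩

lemma not_isDomSet_iff {G : SimpleGraph V} {T : Finset V} :
    ¬ IsDomSet G T ↔ ∃ x, x ∉ T ∧ ∀ y ∈ T, ¬ G.Adj y x := by
  unfold IsDomSet
  push_neg
  rfl

lemma mem_aSet_iff {G : SimpleGraph V} {S : Finset V} {v : V} :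
    v ∈ aSet G S ↔ v ∈ S ∧ ¬ IsDomSet G (S.erase v) := Finset.mem_filter

/-- witness structure for a newly-critical vertex after deleting `u`. -/
lemma new_crit_witness {G : SimpleGraph V} {S : Finset V} {u w : V}
    (hdom : IsDomSet G S) (hu' : IsDomSet G (S.erase u))
    (hw : w ∈ aSet G (S.erase u)) (hwn : w ∉ aSet G S) :
    w ≠ u ∧ w ∈ S ∧ IsDomSet G (S.erase w) ∧
      ∃ x, (x = u ∨ G.Adj u x) ∧ (x = w ∨ G.Adj w x) ∧
        (∀ y ∈ S, (y = x ∨ G.Adj y x) → y = u ∨ y = w) := by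
  rw [mem_aSet_iff] at hw
  obtain ⟨hwS', hncrit⟩ := hw
  have hwu : w ≠ u := (Finset.mem_erase.1 hwS').1
  have hwS : w ∈ S := (Finset.mem_erase.1 hwS').2
  have hSw : IsDomSet G (S.erase w) := by
    by_contra hc
    exact hwn (mem_aSet_iff.2 ⟨hwS, hc⟩)
  obtain ⟨x, hxmem, hxadj⟩ := not_isDomSet_iff.1 hncrit
  refine ⟨hwu, hwS, hSw, x, ?_, ?_, ?_⟩
  · -- u dominates x
    rcases hSw x with hx | ⟨y, hy, hadj⟩
    · rw [Finset.mem_erase] at hx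
      left
      by_contra hxu
      exact hxmem (Finset.mem_erase.2 ⟨hx.1, Finset.mem_erase.2 ⟨hxu, hx.2⟩⟩)
    · rw [Finset.mem_erase] at hy
      right
      by_cases hyu : y = u
      · rwa [hyu] at hadj
      · exact absurd hadj (hxadj y (Finset.mem_erase.2 ⟨hy.1, Finset.mem_erase.2 ⟨hyu, hy.2⟩⟩))
  · -- w dominates x
    rcases hu' x with hx | ⟨y, hy, hadj⟩
    · rw [Finset.mem_erase] at hx
      left
      by_contra hxw
      exact hxmem (Finset.mem_erase.2 ⟨hxw, Finset.mem_erase.2 ⟨hx.1, hx.2⟩⟩)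
    · rw [Finset.mem_erase] at hy
      right
      by_cases hyw : y = w
      · rwa [hyw] at hadj
      · exact absurd hadj (hxadj y (Finset.mem_erase.2 ⟨hyw, Finset.mem_erase.2 ⟨hy.1, hy.2⟩⟩))
  · intro y hyS hydom
    by_contra hc
    push_neg at hc
    have hymem : y ∈ (S.erase u).erase w :=
      Finset.mem_erase.2 ⟨hc.2, Finset.mem_erase.2 ⟨hc.1, hyS⟩⟩
    rcases hydom with rfl | hadj
    · exact hxmem hymem
    · exact hxadj y hymem hadj

lemma new_crit_shape (G : SimpleGraph V) (hT : G.IsTree) (r : V) {u w x : V}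
    (hwu : w ≠ u) (hdist : G.dist w r ≤ G.dist u r)
    (hx1 : x = u ∨ G.Adj u x) (hx2 : x = w ∨ G.Adj w x) :
    (G.Adj u w ∧ G.dist u r = G.dist w r + 1 ∧ x = u) ∨
    (G.Adj u x ∧ G.dist u r = G.dist x r + 1) := by
  rcases hx1 with heq | hadj
  · rcases hx2 with heq2 | hadjwx
    · exact absurd (heq2.symm.trans heq) hwu
    · have hadj' : G.Adj u w := (heq ▸ hadjwx).symm
      rcases adj_dist_level G hT r hadj' with h | h
      · exact Or.inl ⟨hadj', h, heq⟩
      · omega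
  · rcases adj_dist_level G hT r hadj with h | h
    · exact Or.inr ⟨hadj, h⟩
    · exfalso
      rcases hx2 with heq2 | hadjw
      · rw [heq2] at h; omega
      · rcases adj_dist_level G hT r hadjw with h2 | h2
        · omega
        · exact hwu (parent_unique G hT r hadjw.symm hadj.symm h2 h)

lemma new_crit_unique (G : SimpleGraph V) (hT : G.IsTree) (r : V) {S : Finset V} {u : V}
    (hdom : IsDomSet G S) (hu : u ∈ S) (hu' : IsDomSet G (S.erase u))
    (hmax : ∀ b ∈ S, IsDomSet G (S.erase b) → G.dist b r ≤ G.dist u r) :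
    ∀ w ∈ aSet G (S.erase u) \ aSet G S, ∀ w' ∈ aSet G (S.erase u) \ aSet G S, w = w' := by
  intro w hw w' hw'
  rw [Finset.mem_sdiff] at hw hw'
  obtain ⟨hwu, hwS, hwnc, x, hx1, hx2, hx3⟩ := new_crit_witness hdom hu' hw.1 hw.2
  obtain ⟨hwu', hwS', hwnc', x', hx1', hx2', hx3'⟩ := new_crit_witness hdom hu' hw'.1 hw'.2
  have hdw : G.dist w r ≤ G.dist u r := hmax w hwS hwnc
  have hdw' : G.dist w' r ≤ G.dist u r := hmax w' hwS' hwnc'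
  rcases new_crit_shape G hT r hwu hdw hx1 hx2 with ⟨ha, hd, _⟩ | ⟨ha, hd⟩ <;>
    rcases new_crit_shape G hT r hwu' hdw' hx1' hx2' with ⟨ha', hd', _⟩ | ⟨ha', hd'⟩
  · exact parent_unique G hT r ha ha' hd hd'
  · have hwx : w = x' := parent_unique G hT r ha ha' hd hd'
    rcases hx3' w hwS (Or.inl hwx) with h | h
    · exact absurd h hwu
    · exact h
  · have hwx : w' = x := parent_unique G hT r ha' ha hd' hd
    rcases hx3 w' hwS' (Or.inl hwx) with h | h
    · exact absurd h hwu'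
    · exact h.symm
  · have hxx : x = x' := parent_unique G hT r ha ha' hd hd'
    have hx2'' : w' = x ∨ G.Adj w' x := by
      rw [hxx]
      exact hx2'.imp Eq.symm id
    rcases hx3 w' hwS' hx2'' with h | h
    · exact absurd h hwu'
    · exact h.symm

lemma gamma_le (G : SimpleGraph V) {S : Finset V} (h : IsDomSet G S) : gamma G ≤ S.card :=
  Nat.sInf_le ⟨S, h, rfl⟩

lemma lemmaB (G : SimpleGraph V) (hT : G.IsTree) :
    ∀ S : Finset V, IsDomSet G S → 2 * gamma G ≤ S.card + (aSet G S).card := by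
  have hne : Nonempty V := hT.isConnected.nonempty
  obtain ⟨r⟩ := hne
  have key : ∀ n : ℕ, ∀ S : Finset V, S.card = n → IsDomSet G S →
      2 * gamma G ≤ S.card + (aSet G S).card := by
    intro n
    induction n using Nat.strong_induction_on with
    | _ n ih =>
      intro S hcard hdom
      by_cases hmin : ∃ u ∈ S, IsDomSet G (S.erase u)
      · set B := S.filter (fun v => IsDomSet G (S.erase v)) with hB
        have hBne : B.Nonempty := by
          obtain ⟨u, hu, hu'⟩ := hmin
          exact ⟨u, Finset.mem_filter.2 ⟨hu, hu'⟩⟩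
        obtain ⟨u, huB, humax⟩ := B.exists_max_image (fun v => G.dist v r) hBne
        rw [Finset.mem_filter] at huB
        obtain ⟨huS, hu'⟩ := huB
        have hmax : ∀ b ∈ S, IsDomSet G (S.erase b) → G.dist b r ≤ G.dist u r := by
          intro b hb hb'
          exact humax b (Finset.mem_filter.2 ⟨hb, hb'⟩)
        have hcard' : (S.erase u).card = n - 1 := by
          rw [Finset.card_erase_of_mem huS, hcard]
        have hn1 : n - 1 < n := by
          have : 0 < n := by
            rw [← hcard]
            exact Finset.card_pos.2 ⟨u, huS⟩
          omega
        have hIH := ih (n - 1) hn1 (S.erase u) hcard' hu'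
        -- aSet (S.erase u) ⊆ aSet S ∪ (one extra vertex)
        have hsub : aSet G (S.erase u) ⊆ aSet G S ∪ (aSet G (S.erase u) \ aSet G S) := by
          intro w hw
          by_cases h : w ∈ aSet G S
          · exact Finset.mem_union_left _ h
          · exact Finset.mem_union_right _ (Finset.mem_sdiff.2 ⟨hw, h⟩)
        have hone : (aSet G (S.erase u) \ aSet G S).card ≤ 1 :=
          Finset.card_le_one.2 (fun a ha b hb =>
            new_crit_unique G hT r hdom huS hu' hmax a ha b hb)
        have haS : (aSet G (S.erase u)).card ≤ (aSet G S).card + 1 := by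
          calc (aSet G (S.erase u)).card
              ≤ (aSet G S ∪ (aSet G (S.erase u) \ aSet G S)).card := Finset.card_le_card hsub
            _ ≤ (aSet G S).card + (aSet G (S.erase u) \ aSet G S).card := Finset.card_union_le _ _
            _ ≤ (aSet G S).card + 1 := by omega
        have hSeq : (S.erase u).card + 1 = S.card := by
          rw [Finset.card_erase_of_mem huS]
          have : 0 < S.card := Finset.card_pos.2 ⟨u, huS⟩
          omega
        omega
      · -- every vertex of S is critical
        push_neg at hmin
        have haS : aSet G S = S := by
          apply Finset.filter_true_of_mem
          intro v hv
          exact hmin v hv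
        have := gamma_le G hdom
        rw [haS]
        omega
  intro S hS
  exact key S.card S rfl hS

lemma le_bigGamma (G : SimpleGraph V) {J : Finset V} (h : MinimalDomSet G J) :
    J.card ≤ bigGamma G := by
  apply le_csSup
  · refine ⟨Fintype.card V, ?_⟩
    rintro k ⟨T, -, rfl⟩
    simpa using T.card_le_univ
  · exact ⟨J, h, rfl⟩

/-- every independent set extends to a maximal one, which is a minimal dominating set. -/
lemma exists_minimalDom_superset (G : SimpleGraph V) (I : Finset V)
    (hI : ∀ a ∈ I, ∀ b ∈ I, a ≠ b → ¬ G.Adj a b) :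
    ∃ J : Finset V, I ⊆ J ∧ MinimalDomSet G J := by
  set F := Finset.univ.filter
    (fun J : Finset V => I ⊆ J ∧ ∀ a ∈ J, ∀ b ∈ J, a ≠ b → ¬ G.Adj a b) with hF
  have hFne : F.Nonempty := ⟨I, Finset.mem_filter.2 ⟨Finset.mem_univ _, subset_rfl, hI⟩⟩
  obtain ⟨J, hJF, hJmax⟩ := F.exists_max_image (fun J => J.card) hFne
  rw [Finset.mem_filter] at hJF
  obtain ⟨-, hIJ, hJind⟩ := hJF
  have hdom : IsDomSet G J := by
    intro v
    by_cases hv : v ∈ J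
    · exact Or.inl hv
    right
    by_contra hc
    push_neg at hc
    have hins : insert v J ∈ F := by
      rw [Finset.mem_filter]
      refine ⟨Finset.mem_univ _, hIJ.trans (Finset.subset_insert _ _), ?_⟩
      intro a ha b hb hne hadj
      rcases Finset.mem_insert.1 ha with rfl | haJ
      · rcases Finset.mem_insert.1 hb with rfl | hbJ
        · exact hne rfl
        · exact hc b hbJ hadj.symm
      · rcases Finset.mem_insert.1 hb with rfl | hbJ
        · exact hc a haJ hadj
        · exact hJind a haJ b hbJ hne hadj
    have := hJmax _ hins
    rw [Finset.card_insert_of_notMem hv] at this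
    omega
  refine ⟨J, hIJ, hdom, ?_⟩
  intro T hT hTdom
  obtain ⟨v, hvJ, hvT⟩ := Finset.exists_of_ssubset hT
  rcases hTdom v with hv | ⟨y, hy, hadj⟩
  · exact hvT hv
  · exact hJind y (hT.1 hy) v hvJ hadj.ne hadj

lemma lemmaC (G : SimpleGraph V) (hT : G.IsTree) (S : Finset V) (hdom : IsDomSet G S) :
    S.card + (aSet G S).card ≤ 2 * bigGamma G := by
  classical
  obtain ⟨r⟩ := hT.isConnected.nonempty
  set A1 := a1Set G S with hA1
  set A2 := a2Set G S with hA2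
  set B := S \ aSet G S with hBdef
  -- choice of private neighbour for vertices of A1
  set pickx : V → V := fun v =>
    if h : (closedNbhd G v ∩ N1Set G S).Nonempty then h.choose else v with hpickx
  have fact_x : ∀ v ∈ A1, G.Adj v (pickx v) ∧ pickx v ∉ S ∧
      ∀ y ∈ S, (y = pickx v ∨ G.Adj (pickx v) y) → y = v := by
    intro v hv
    rw [hA1, a1Set, Finset.mem_filter] at hv
    obtain ⟨hva, hvne⟩ := hv
    have hvS : v ∈ S := (Finset.mem_filter.1 hva).1
    have hx : pickx v ∈ closedNbhd G v ∩ N1Set G S := by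
      rw [hpickx]
      simp only [hvne, dif_pos]
      exact hvne.choose_spec
    rw [Finset.mem_inter] at hx
    obtain ⟨hx1, hx2⟩ := hx
    rw [closedNbhd, Finset.mem_filter] at hx1
    rw [N1Set, Finset.mem_filter] at hx2
    obtain ⟨-, hxS, hxcard⟩ := hx2
    have hadj : G.Adj v (pickx v) := by
      rcases hx1.2 with h | h
      · exact absurd (show pickx v ∈ S by rw [h]; exact hvS) hxS
      · exact h
    have hsingle : closedNbhd G (pickx v) ∩ S = {v} := by
      obtain ⟨a, ha⟩ := Finset.card_eq_one.1 hxcard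
      have hvmem : v ∈ closedNbhd G (pickx v) ∩ S := by
        rw [Finset.mem_inter, closedNbhd, Finset.mem_filter]
        exact ⟨⟨Finset.mem_univ _, Or.inr hadj.symm⟩, hvS⟩
      rw [ha] at hvmem ⊢
      rw [Finset.mem_singleton] at hvmem
      rw [hvmem]
    refine ⟨hadj, hxS, ?_⟩
    intro y hyS hy
    have : y ∈ closedNbhd G (pickx v) ∩ S := by
      rw [Finset.mem_inter, closedNbhd, Finset.mem_filter]
      exact ⟨⟨Finset.mem_univ _, hy.imp id id⟩, hyS⟩
    rw [hsingle, Finset.mem_singleton] at this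
    exact this
  have fact_a2 : ∀ v ∈ A2, ∀ y ∈ S, (y = v ∨ G.Adj v y) → y = v := by
    intro v hv
    rw [hA2, a2Set, Finset.mem_filter] at hv
    obtain ⟨hva, hvempty⟩ := hv
    rw [aSet, Finset.mem_filter] at hva
    obtain ⟨hvS, hncrit⟩ := hva
    obtain ⟨p, hpmem, hpadj⟩ := not_isDomSet_iff.1 hncrit
    have hpv : p = v := by
      by_contra hne
      rcases hdom p with hp | ⟨y, hyS, hadj⟩
      · exact hpmem (Finset.mem_erase.2 ⟨hne, hp⟩)
      · have hyv : y = v := by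
          by_contra hyv
          exact hpadj y (Finset.mem_erase.2 ⟨hyv, hyS⟩) hadj
        subst hyv
        have hpS : p ∉ S := fun hpS => hpmem (Finset.mem_erase.2 ⟨hne, hpS⟩)
        have hp1 : p ∈ N1Set G S := by
          rw [N1Set, Finset.mem_filter]
          refine ⟨Finset.mem_univ _, hpS, ?_⟩
          rw [Finset.card_eq_one]
          refine ⟨y, ?_⟩
          apply Finset.eq_singleton_iff_unique_mem.2
          constructor
          · rw [Finset.mem_inter, closedNbhd, Finset.mem_filter]
            exact ⟨⟨Finset.mem_univ _, Or.inr hadj.symm⟩, hyS⟩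
          · intro z hz
            rw [Finset.mem_inter, closedNbhd, Finset.mem_filter] at hz
            obtain ⟨⟨-, hz1⟩, hzS⟩ := hz
            rcases hz1 with rfl | hz1
            · exact absurd hzS hpS
            · by_contra hzy
              exact hpadj z (Finset.mem_erase.2 ⟨hzy, hzS⟩) hz1.symm
        have : p ∈ closedNbhd G y ∩ N1Set G S := by
          rw [Finset.mem_inter, closedNbhd, Finset.mem_filter]
          exact ⟨⟨Finset.mem_univ _, Or.inr hadj⟩, hp1⟩
        rw [hvempty] at this
        exact absurd this (Finset.notMem_empty _)
    subst hpv
    intro y hyS hy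
    rcases hy with rfl | hadj
    · rfl
    · by_contra hyp
      exact hpadj y (Finset.mem_erase.2 ⟨hyp, hyS⟩) hadj.symm

  -- choose the parity class containing at least half of B
  obtain ⟨ε, hε01, hεcard⟩ : ∃ ε : ℕ, (ε = 0 ∨ ε = 1) ∧
      B.card ≤ 2 * (B.filter (fun v => G.dist v r % 2 = ε)).card := by
    have hsplit := Finset.card_filter_add_card_filter_not
      (s := B) (p := fun v => G.dist v r % 2 = 0)
    have heq : B.filter (fun v => ¬ (G.dist v r % 2 = 0)) =
        B.filter (fun v => G.dist v r % 2 = 1) := by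
      apply Finset.filter_congr
      intro v _
      constructor <;> intro h <;> omega
    by_cases h : (B.filter (fun v => ¬(G.dist v r % 2 = 0))).card ≤
        (B.filter (fun v => G.dist v r % 2 = 0)).card
    · exact ⟨0, Or.inl rfl, by omega⟩
    · refine ⟨1, Or.inr rfl, ?_⟩
      rw [← heq]
      omega
  set K : V → Prop := fun v => G.dist v r % 2 = ε with hK
  have hpar : ∀ a b : V, G.Adj a b → (K a ↔ ¬ K b) := by
    intro a b hadj
    rcases adj_dist_level G hT r hadj with h | h <;> rw [hK] <;>
      simp only [] <;> omega
  set X := (A1.filter (fun v => ¬ K v)).image pickx with hX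
  set I := A2 ∪ (A1.filter K ∪ (X ∪ B.filter K)) with hI
  have hA1S : A1 ⊆ S := by
    rw [hA1, a1Set]
    exact (Finset.filter_subset _ _).trans (Finset.filter_subset _ _)
  have hA2S : A2 ⊆ S := by
    rw [hA2, a2Set]
    exact (Finset.filter_subset _ _).trans (Finset.filter_subset _ _)
  have hA1a : A1 ⊆ aSet G S := Finset.filter_subset _ _
  have hA2a : A2 ⊆ aSet G S := Finset.filter_subset _ _
  have hA12 : ∀ v, v ∈ A1 → v ∈ A2 → False := by
    intro v h1 h2
    rw [hA1, a1Set, Finset.mem_filter] at h1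
    rw [hA2, a2Set, Finset.mem_filter] at h2
    rw [h2.2] at h1
    exact Finset.not_nonempty_empty h1.2
  have hXK : ∀ x ∈ X, K x := by
    intro x hx
    rw [hX] at hx
    obtain ⟨v, hv, rfl⟩ := Finset.mem_image.1 hx
    rw [Finset.mem_filter] at hv
    have := (hpar v (pickx v) (fact_x v hv.1).1).not_left.1
    exact this hv.2
  have hXS : ∀ x ∈ X, x ∉ S := by
    intro x hx
    rw [hX] at hx
    obtain ⟨v, hv, rfl⟩ := Finset.mem_image.1 hx
    rw [Finset.mem_filter] at hv
    exact (fact_x v hv.1).2.1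
  -- independence of I
  have hSmem : ∀ a ∈ I, a ∉ X → a ∈ S := by
    intro a ha haX
    rw [hI] at ha
    rcases Finset.mem_union.1 ha with h | h
    · exact hA2S h
    rcases Finset.mem_union.1 h with h | h
    · exact hA1S (Finset.mem_filter.1 h).1
    rcases Finset.mem_union.1 h with h | h
    · exact absurd h haX
    · exact (Finset.mem_sdiff.1 (Finset.mem_filter.1 h).1).1
  have hA2I : ∀ v ∈ A2, ∀ b ∈ I, ¬ G.Adj v b := by
    intro v hv b hb hadj
    by_cases hbX : b ∈ X
    · rw [hX] at hbX
      obtain ⟨w, hw, heq⟩ := Finset.mem_image.1 hbX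
      rw [Finset.mem_filter] at hw
      have := (fact_x w hw.1).2.2 v (hA2S hv) (by rw [heq]; exact Or.inr hadj.symm)
      exact hA12 v (this ▸ hw.1) hv
    · have hbS : b ∈ S := hSmem b hb hbX
      exact hadj.ne' (fact_a2 v hv b hbS (Or.inr hadj))
  have hKI : ∀ a ∈ I, a ∉ A2 → K a := by
    intro a ha haA2
    rw [hI] at ha
    rcases Finset.mem_union.1 ha with h | h
    · exact absurd h haA2
    rcases Finset.mem_union.1 h with h | h
    · exact (Finset.mem_filter.1 h).2
    rcases Finset.mem_union.1 h with h | h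
    · exact hXK a h
    · exact (Finset.mem_filter.1 h).2
  have hind : ∀ a ∈ I, ∀ b ∈ I, a ≠ b → ¬ G.Adj a b := by
    intro a ha b hb hne hadj
    by_cases haA2 : a ∈ A2
    · exact hA2I a haA2 b hb hadj
    by_cases hbA2 : b ∈ A2
    · exact hA2I b hbA2 a ha hadj.symm
    have hKa := hKI a ha haA2
    have hKb := hKI b hb hbA2
    exact (hpar a b hadj).1 hKa hKb
  -- cardinality of I
  have hXcard : X.card = (A1.filter (fun v => ¬ K v)).card := by
    rw [hX]
    apply Finset.card_image_of_injOn
    intro v hv v' hv' heq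
    rw [Finset.mem_coe, Finset.mem_filter] at hv hv'
    apply (fact_x v' hv'.1).2.2 v (hA1S hv.1)
    right
    rw [← heq]
    exact (fact_x v hv.1).1.symm
  have hd3 : Disjoint X (B.filter K) := by
    rw [Finset.disjoint_left]
    intro x hx hxB
    exact hXS x hx ((Finset.mem_sdiff.1 (Finset.mem_filter.1 hxB).1).1)
  have hd2 : Disjoint (A1.filter K) (X ∪ B.filter K) := by
    rw [Finset.disjoint_left]
    intro x hx hxu
    have hxS : x ∈ S := hA1S (Finset.mem_filter.1 hx).1
    have hxa : x ∈ aSet G S := hA1a (Finset.mem_filter.1 hx).1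
    rcases Finset.mem_union.1 hxu with h | h
    · exact hXS x h hxS
    · exact (Finset.mem_sdiff.1 (Finset.mem_filter.1 h).1).2 hxa
  have hd1 : Disjoint A2 (A1.filter K ∪ (X ∪ B.filter K)) := by
    rw [Finset.disjoint_left]
    intro x hx hxu
    rcases Finset.mem_union.1 hxu with h | h
    · exact hA12 x (Finset.mem_filter.1 h).1 hx
    rcases Finset.mem_union.1 h with h | h
    · exact hXS x h (hA2S hx)
    · exact (Finset.mem_sdiff.1 (Finset.mem_filter.1 h).1).2 (hA2a hx)
  have hIcard : I.card = A2.card + ((A1.filter K).card + (X.card + (B.filter K).card)) := by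
    rw [hI, Finset.card_union_of_disjoint hd1, Finset.card_union_of_disjoint hd2,
      Finset.card_union_of_disjoint hd3]
  have hA1split : (A1.filter K).card + (A1.filter (fun v => ¬ K v)).card = A1.card :=
    Finset.card_filter_add_card_filter_not _
  have hA12card : A1.card + A2.card = (aSet G S).card := by
    have : a2Set G S = (aSet G S).filter
        (fun v => ¬ (closedNbhd G v ∩ N1Set G S).Nonempty) := by
      rw [a2Set]
      apply Finset.filter_congr
      intro v _
      rw [Finset.not_nonempty_iff_eq_empty]
    rw [hA1, hA2, this, a1Set]
    exact Finset.card_filter_add_card_filter_not _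
  have hScard : S.card = (aSet G S).card + B.card := by
    have hsub : aSet G S ⊆ S := Finset.filter_subset _ _
    have h1 : B.card = S.card - (aSet G S).card := Finset.card_sdiff_of_subset hsub
    have h2 : (aSet G S).card ≤ S.card := Finset.card_le_card hsub
    omega
  obtain ⟨J, hIJ, hJmin⟩ := exists_minimalDom_superset G I hind
  have hJcard := le_bigGamma G hJmin
  have hIJcard : I.card ≤ J.card := Finset.card_le_card hIJ
  rw [hXcard] at hIcard
  have hBK : (B.filter (fun v => G.dist v r % 2 = ε)).card = (B.filter K).card := by
    have heq : B.filter (fun v => G.dist v r % 2 = ε) = B.filter K :=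
      Finset.filter_congr (fun v _ => Iff.rfl)
    rw [heq]
  omega

lemma identityA (G : SimpleGraph V) :
    ∑ S ∈ Finset.univ.filter (fun S : Finset V => IsDomSet G S), (Finset.univ \ S).card
    = ∑ S ∈ Finset.univ.filter (fun S : Finset V => IsDomSet G S),
        (S.filter (fun u => IsDomSet G (S.erase u))).card := by
  classical
  rw [← Finset.card_sigma, ← Finset.card_sigma]
  apply Finset.card_bij' (fun p _ => (⟨insert p.2 p.1, p.2⟩ : (_ : Finset V) × V))
    (fun p _ => (⟨p.1.erase p.2, p.2⟩ : (_ : Finset V) × V))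
  · rintro ⟨S, v⟩ hp
    rw [Finset.mem_sigma, Finset.mem_filter] at hp ⊢
    obtain ⟨⟨-, hSdom⟩, hv⟩ := hp
    rw [Finset.mem_sdiff] at hv
    refine ⟨⟨Finset.mem_univ _, isDomSet_mono (Finset.subset_insert _ _) hSdom⟩, ?_⟩
    rw [Finset.mem_filter]
    refine ⟨Finset.mem_insert_self _ _, ?_⟩
    rw [Finset.erase_insert hv.2]
    exact hSdom
  · rintro ⟨S, u⟩ hp
    rw [Finset.mem_sigma, Finset.mem_filter] at hp ⊢
    obtain ⟨⟨-, hSdom⟩, hu⟩ := hp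
    rw [Finset.mem_filter] at hu
    refine ⟨⟨Finset.mem_univ _, hu.2⟩, ?_⟩
    rw [Finset.mem_sdiff]
    exact ⟨Finset.mem_univ _, Finset.notMem_erase _ _⟩
  · rintro ⟨S, v⟩ hp
    rw [Finset.mem_sigma, Finset.mem_filter] at hp
    have hv : v ∉ S := (Finset.mem_sdiff.1 hp.2).2
    simp [Finset.erase_insert hv]
  · rintro ⟨S, u⟩ hp
    rw [Finset.mem_sigma, Finset.mem_filter] at hp
    rw [Finset.mem_filter] at hp
    have hu : u ∈ S := hp.2.1
    simp [Finset.insert_erase hu]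

theorem avd_bounds (G : SimpleGraph V) (hT : G.IsTree) :
    ((Fintype.card V : ℚ) + 2 * (gamma G : ℚ)) / 3 ≤ avd G ∧
      avd G ≤ ((Fintype.card V : ℚ) + 2 * (bigGamma G : ℚ)) / 3 := by

  classical
  unfold avd
  set D := Finset.univ.filter (fun S : Finset V => IsDomSet G S) with hD
  have hUnivDom : IsDomSet G Finset.univ := fun v => Or.inl (Finset.mem_univ v)
  have hDpos : (0 : ℚ) < (D.card : ℚ) := by
    have hmem : Finset.univ ∈ D := Finset.mem_filter.2 ⟨Finset.mem_univ _, hUnivDom⟩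
    have := Finset.card_pos.2 ⟨_, hmem⟩
    exact_mod_cast this
  set n := Fintype.card V with hn
  set M : ℚ := ∑ S ∈ D, (S.card : ℚ) with hM
  set AA : ℚ := ∑ S ∈ D, ((aSet G S).card : ℚ) with hAA
  have hcast1 : ∀ S : Finset V, ((Finset.univ \ S).card : ℚ) = (n : ℚ) - (S.card : ℚ) := by
    intro S
    have h := Finset.card_sdiff_of_subset (Finset.subset_univ S)
    have hle : S.card ≤ n := Finset.card_le_univ S
    rw [Finset.card_univ] at h
    rw [h, Nat.cast_sub hle]
  have hcast2 : ∀ S : Finset V,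
      ((S.filter (fun u => IsDomSet G (S.erase u))).card : ℚ)
        = (S.card : ℚ) - ((aSet G S).card : ℚ) := by
    intro S
    have h := Finset.card_filter_add_card_filter_not
      (s := S) (p := fun u => IsDomSet G (S.erase u))
    have h2 : (aSet G S).card = (S.filter (fun u => ¬ IsDomSet G (S.erase u))).card := rfl
    have hle : (aSet G S).card ≤ S.card := Finset.card_le_card (Finset.filter_subset _ _)
    have h3 : (S.filter (fun u => IsDomSet G (S.erase u))).card = S.card - (aSet G S).card := by
      omega
    rw [h3, Nat.cast_sub hle]
  have hsum1 : ∑ S ∈ D, ((Finset.univ \ S).card : ℚ) = (D.card : ℚ) * (n : ℚ) - M := by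
    rw [Finset.sum_congr rfl (fun S _ => hcast1 S), Finset.sum_sub_distrib,
      Finset.sum_const, nsmul_eq_mul, hM]
  have hsum2 : ∑ S ∈ D, (((S.filter (fun u => IsDomSet G (S.erase u)))).card : ℚ) = M - AA := by
    rw [Finset.sum_congr rfl (fun S _ => hcast2 S), Finset.sum_sub_distrib, hM, hAA]
  have hidq : (D.card : ℚ) * (n : ℚ) - M = M - AA := by
    rw [← hsum1, ← hsum2]
    have h0 := identityA G
    have := congrArg (fun k : ℕ => (k : ℚ)) h0
    push_cast at this
    rw [hD]
    exact_mod_cast this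
  have hlowsum : (D.card : ℚ) * (2 * (gamma G : ℚ)) ≤ M + AA := by
    calc (D.card : ℚ) * (2 * (gamma G : ℚ)) = ∑ _S ∈ D, (2 * (gamma G : ℚ)) := by
          rw [Finset.sum_const, nsmul_eq_mul]
      _ ≤ ∑ S ∈ D, ((S.card : ℚ) + ((aSet G S).card : ℚ)) := by
          apply Finset.sum_le_sum
          intro S hS
          have hSdom : IsDomSet G S := (Finset.mem_filter.1 hS).2
          have := lemmaB G hT S hSdom
          push_cast
          exact_mod_cast this
      _ = M + AA := by rw [Finset.sum_add_distrib, hM, hAA]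
  have hupsum : M + AA ≤ (D.card : ℚ) * (2 * (bigGamma G : ℚ)) := by
    calc M + AA = ∑ S ∈ D, ((S.card : ℚ) + ((aSet G S).card : ℚ)) := by
          rw [Finset.sum_add_distrib, hM, hAA]
      _ ≤ ∑ _S ∈ D, (2 * (bigGamma G : ℚ)) := by
          apply Finset.sum_le_sum
          intro S hS
          have hSdom : IsDomSet G S := (Finset.mem_filter.1 hS).2
          have := lemmaC G hT S hSdom
          exact_mod_cast this
      _ = (D.card : ℚ) * (2 * (bigGamma G : ℚ)) := by
          rw [Finset.sum_const, nsmul_eq_mul]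
  constructor
  · rw [div_le_div_iff₀ (by norm_num) hDpos]
    have hexp : ((n : ℚ) + 2 * (gamma G : ℚ)) * (D.card : ℚ)
        = (D.card : ℚ) * (n : ℚ) + (D.card : ℚ) * (2 * (gamma G : ℚ)) := by ring
    rw [hexp]
    linarith
  · rw [div_le_div_iff₀ hDpos (by norm_num)]
    have hexp : ((n : ℚ) + 2 * (bigGamma G : ℚ)) * (D.card : ℚ)
        = (D.card : ℚ) * (n : ℚ) + (D.card : ℚ) * (2 * (bigGamma G : ℚ)) := by ring
    rw [hexp]
    linarith
end
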